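/- arXiv:2211.05567 — 4 statements merged into one kernel-verified Lean document; each statement's English description precedes it below -/
import Mathlib

section
/- For every squashing function Ψ : ℝ → ℝ (i.e., a nondecreasing function with values in [0,1] satisfying Ψ(λ) → 1 as λ → ∞ and Ψ(λ) → 0 as λ → −∞), every dimension r ≥ 1, every continuous function f : ℝ^r → ℝ, every compact set K ⊆ ℝ^r, and every ε > 0, there exist a positive integer N, coefficients β₁,…,β_N ∈ ℝ, weight vectors w₁,…,w_N ∈ ℝ^r, and biases θ₁,…,θ_N ∈ ℝ such that sup_{x ∈ K} |f(x) − ∑_{i=1}^N β_i Ψ(⟨w_i, x⟩ + θ_i)| < ε. That is, single-hidden-layer feedforward networks with activation Ψ are uniformly dense on compacta in the space of continuous functions on ℝ^r. -/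
open Filter

/-- A squashing function: nondecreasing, with values in `[0,1]`,
tending to `1` at `+∞` and to `0` at `-∞`. -/
def IsSquashing (Ψ : ℝ → ℝ) : Prop :=
  Monotone Ψ ∧ (∀ x, Ψ x ∈ Set.Icc (0 : ℝ) 1) ∧
    Tendsto Ψ atTop (nhds 1) ∧ Tendsto Ψ atBot (nhds 0)

lemma squash_near (Ψ : ℝ → ℝ) (hΨ : IsSquashing Ψ) {η : ℝ} (hη : 0 < η) :
    ∃ T : ℝ, 0 < T ∧ (∀ s, T ≤ s → |Ψ s - 1| ≤ η) ∧ (∀ s, s ≤ -T → |Ψ s| ≤ η) := by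
  obtain ⟨-, -, htop, hbot⟩ := hΨ
  have h1 : ∀ᶠ s in atTop, |Ψ s - 1| < η := by
    have := htop (Metric.ball_mem_nhds 1 hη)
    simpa [Metric.mem_ball, Real.dist_eq] using this
  have h2 : ∀ᶠ s in atBot, |Ψ s| < η := by
    have := hbot (Metric.ball_mem_nhds 0 hη)
    simpa [Metric.mem_ball, Real.dist_eq] using this
  obtain ⟨T₁, hT₁⟩ := eventually_atTop.mp h1
  obtain ⟨T₂, hT₂⟩ := eventually_atBot.mp h2
  refine ⟨max (max T₁ (-T₂)) 1, lt_of_lt_of_le one_pos (le_max_right _ _), ?_, ?_⟩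
  · intro s hs
    exact (hT₁ s (le_trans ((le_max_left T₁ (-T₂)).trans (le_max_left _ 1)) hs)).le
  · intro s hs
    refine (hT₂ s ?_).le
    have : -T₂ ≤ max (max T₁ (-T₂)) 1 := (le_max_right T₁ (-T₂)).trans (le_max_left _ 1)
    linarith

set_option maxHeartbeats 1000000 in
open Finset in
lemma one_dim_approx (Ψ : ℝ → ℝ) (hΨ : IsSquashing Ψ) (g : ℝ → ℝ) (hg : Continuous g)
    (M ε : ℝ) (hM : 0 < M) (hε : 0 < ε) :
    ∃ (n : ℕ) (c a b : Fin n → ℝ),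
      ∀ t ∈ Set.Icc (-M) M, |g t - ∑ k, c k * Ψ (a k * t + b k)| < ε := by
  classical
  have hΨ01 := hΨ.2.1
  -- uniform continuity on a slightly larger interval
  have hUC : UniformContinuousOn g (Set.Icc (-M-1) (M+1)) :=
    isCompact_Icc.uniformContinuousOn_of_continuous hg.continuousOn
  rw [Metric.uniformContinuousOn_iff] at hUC
  obtain ⟨δ, hδpos, hδ⟩ := hUC (ε/4) (by positivity)
  set δ' := min δ 1 with hδ'def
  have hδ'pos : 0 < δ' := lt_min hδpos one_pos
  have hδ'le1 : δ' ≤ 1 := min_le_right _ _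
  have hδ'leδ : δ' ≤ δ := min_le_left _ _
  obtain ⟨n, hn⟩ := exists_nat_gt (2*M/δ')
  have hnpos : 0 < (n:ℝ) := lt_of_le_of_lt (by positivity) hn
  set h := 2*M/n with hhdef
  have hh : 0 < h := by positivity
  have hhδ : h < δ' := by
    rw [hhdef, div_lt_iff₀ hnpos]
    calc 2*M = (2*M/δ') * δ' := by field_simp
    _ < n * δ' := by exact mul_lt_mul_of_pos_right hn hδ'pos
    _ = δ' * n := mul_comm _ _
  have hhn : (n:ℝ) * h = 2*M := by rw [hhdef]; field_simp
  set G : ℕ → ℝ := fun k => g (-M + k*h) with hGdef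
  set c : ℕ → ℝ := fun k => if k = 0 then G 0 else G k - G (k-1) with hcdef
  set m : ℕ → ℝ := fun k => if k = 0 then -M-1 else -M + ((k:ℝ) - 1/2)*h with hmdef
  set S := ∑ k ∈ range (n+1), |c k| with hSdef
  have hS0 : 0 ≤ S := Finset.sum_nonneg fun k _ => abs_nonneg _
  set η := ε/(4*(S+1)) with hηdef
  have hηpos : 0 < η := by positivity
  obtain ⟨T, hTpos, hT1, hT0⟩ := squash_near Ψ hΨ hηpos
  set A := 4*T/h with hAdef
  have hApos : 0 < A := by positivity
  have hAh : A * (h/4) = T := by rw [hAdef]; field_simp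
  refine ⟨n+1, fun k => c k.1, fun _ => A, fun k => -(A * m k.1), ?_⟩
  intro t ht
  obtain ⟨ht1, ht2⟩ := ht
  rw [Fin.sum_univ_eq_sum_range (fun k => c k * Ψ (A * t + -(A * m k))) (n+1)]
  -- the step function value
  set J := ⌊(t+M)/h + 1/2⌋₊ with hJdef
  have htM : 0 ≤ (t+M)/h := by
    apply div_nonneg _ hh.le; linarith
  have hJle : (J:ℝ) ≤ (t+M)/h + 1/2 := Nat.floor_le (by linarith)
  have hJgt : (t+M)/h + 1/2 < (J:ℝ) + 1 := Nat.lt_floor_add_one _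
  have hJn : J ≤ n := by
    have h1 : (t+M)/h ≤ (n:ℝ) := by
      rw [div_le_iff₀ hh]
      calc t + M ≤ 2*M := by linarith
      _ = (n:ℝ)*h := hhn.symm
    have h2 : J < n + 1 := by
      apply (Nat.floor_lt (by linarith)).mpr
      push_cast
      linarith
    omega
  have hkey : ∀ k : ℕ, 1 ≤ k → (m k ≤ t ↔ k ≤ J) := by
    intro k hk
    have hmk : m k = -M + ((k:ℝ) - 1/2)*h := if_neg (by omega)
    rw [hmk, hJdef, Nat.le_floor_iff (by linarith)]
    rw [← sub_le_iff_le_add]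
    rw [le_div_iff₀ hh]
    constructor <;> intro hx <;> linarith
  set ind : ℕ → ℝ := fun k => if m k ≤ t then 1 else 0 with hinddef
  -- step sum equals G J
  have hstep : ∑ k ∈ range (n+1), c k * ind k = G J := by
    have h0 : c 0 * ind 0 = G 0 := by
      have : m 0 ≤ t := by simp only [hmdef, if_pos rfl]; linarith
      simp [hinddef, this, hcdef]
    have hterm : ∀ i, c (i+1) * ind (i+1) = if i < J then G (i+1) - G i else 0 := by
      intro i
      have hiJ : m (i+1) ≤ t ↔ i < J := by
        rw [hkey (i+1) (by omega)]; omega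
      by_cases hi : i < J
      · rw [if_pos hi]
        simp [hinddef, hiJ.mpr hi, hcdef]
      · rw [if_neg hi]
        have : ¬ m (i+1) ≤ t := fun hc => hi (hiJ.mp hc)
        simp [hinddef, this]
    rw [Finset.sum_range_succ']
    have : ∑ i ∈ range n, c (i+1) * ind (i+1) = ∑ i ∈ range J, (G (i+1) - G i) := by
      rw [Finset.sum_congr rfl (fun i _ => hterm i)]
      rw [← Finset.sum_subset (Finset.range_subset_range.2 hJn)
        (fun i _ hi => if_neg (by simpa using hi))]
      exact Finset.sum_congr rfl (fun i hi => if_pos (Finset.mem_range.mp hi))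
    rw [this, Finset.sum_range_sub, h0]
    ring
  -- the step value is close to g t
  have htJ1 : -M + (J:ℝ)*h ≤ t + h/2 := by
    have h2 := mul_le_mul_of_nonneg_right hJle hh.le
    rw [add_mul, div_mul_cancel₀ _ hh.ne'] at h2
    linarith
  have htJ2 : t - h/2 ≤ -M + (J:ℝ)*h := by
    have h2 := mul_le_mul_of_nonneg_right hJgt.le hh.le
    rw [add_mul, add_mul, div_mul_cancel₀ _ hh.ne', one_mul] at h2
    linarith
  have hgJ : |g t - G J| ≤ ε/4 := by
    have hmem1 : t ∈ Set.Icc (-M-1) (M+1) := ⟨by linarith, by linarith⟩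
    have hmem2 : (-M + (J:ℝ)*h) ∈ Set.Icc (-M-1) (M+1) :=
      ⟨by linarith, by linarith⟩
    have hdist : dist t (-M + (J:ℝ)*h) < δ := by
      rw [Real.dist_eq]
      have habs : |t - (-M + (J:ℝ)*h)| ≤ h/2 :=
        abs_le.mpr ⟨by linarith, by linarith⟩
      have : h/2 < δ := by
        have : h < δ := lt_of_lt_of_le hhδ hδ'leδ
        linarith
      linarith
    have := hδ t hmem1 (-M + (J:ℝ)*h) hmem2 hdist
    rw [Real.dist_eq] at this
    exact le_of_lt this
  -- network close to step sum
  have hnet : |∑ k ∈ range (n+1), c k * Ψ (A * t + -(A * m k))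
      - ∑ k ∈ range (n+1), c k * ind k| ≤ ε/2 := by
    rw [← Finset.sum_sub_distrib]
    refine (Finset.abs_sum_le_sum_abs _ _).trans ?_
    have hpt : ∀ k ∈ range (n+1), |c k * Ψ (A * t + -(A * m k)) - c k * ind k|
        ≤ |c k| * η + (if |t - m k| < h/4 then ε/4 else 0) := by
      intro k hk
      rw [Finset.mem_range] at hk
      have harg : A * t + -(A * m k) = A * (t - m k) := by ring
      rw [harg, ← mul_sub, abs_mul]
      by_cases hbad : |t - m k| < h/4
      · rw [if_pos hbad]
        have hk0 : k ≠ 0 := by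
          intro h0
          rw [h0] at hbad
          have : m 0 = -M-1 := if_pos rfl
          rw [this] at hbad
          have h14 : h/4 ≤ 1 := by linarith
          have he : t - (-M-1) = t + M + 1 := by ring
          rw [he, abs_of_nonneg (by linarith)] at hbad
          linarith
        have hck : |c k| ≤ ε/4 := by
          have hck1 : c k = G k - G (k-1) := if_neg hk0
          have hk1 : 1 ≤ k := Nat.one_le_iff_ne_zero.mpr hk0
          have e1 : -M + (k:ℝ)*h ∈ Set.Icc (-M-1) (M+1) := by
            constructor
            · nlinarith [Nat.cast_nonneg (α := ℝ) k]
            · have : (k:ℝ) ≤ n := Nat.cast_le.mpr (by omega)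
              nlinarith
          have e2 : -M + ((k:ℝ)-1)*h ∈ Set.Icc (-M-1) (M+1) := by
            have hk1' : (1:ℝ) ≤ (k:ℝ) := by exact_mod_cast hk1
            constructor
            · nlinarith
            · have : (k:ℝ) ≤ n := Nat.cast_le.mpr (by omega)
              nlinarith
          have hdd : dist (-M + (k:ℝ)*h) (-M + ((k:ℝ)-1)*h) < δ := by
            rw [Real.dist_eq]
            have : (-M + (k:ℝ)*h) - (-M + ((k:ℝ)-1)*h) = h := by ring
            rw [this, abs_of_pos hh]
            linarith
          have := hδ _ e1 _ e2 hdd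
          rw [Real.dist_eq] at this
          rw [hck1]
          have hGk : G k = g (-M + (k:ℝ)*h) := rfl
          have hGk1 : G (k-1) = g (-M + ((k:ℝ)-1)*h) := by
            simp only [hGdef]
            rw [Nat.cast_sub hk1]
            norm_num
          rw [hGk, hGk1]
          exact this.le
        have hΨb : |Ψ (A * (t - m k)) - ind k| ≤ 1 := by
          obtain ⟨hl, hu⟩ := hΨ01 (A * (t - m k))
          have hind : ind k = 0 ∨ ind k = 1 := by
            simp only [hinddef]
            by_cases hmk : m k ≤ t
            · right; simp [hmk]
            · left; simp [hmk]
          rcases hind with hi | hi <;> rw [hi, abs_le] <;> constructor <;> linarith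
        calc |c k| * |Ψ (A * (t - m k)) - ind k| ≤ (ε/4) * 1 := by
              apply mul_le_mul hck hΨb (abs_nonneg _) (by positivity)
          _ ≤ |c k| * η + ε/4 := by
              have : 0 ≤ |c k| * η := by positivity
              linarith
      · rw [if_neg hbad, add_zero]
        have hΨη : |Ψ (A * (t - m k)) - ind k| ≤ η := by
          rw [not_lt] at hbad
          by_cases hmk : m k ≤ t
          · have : h/4 ≤ t - m k := by
              rw [abs_of_nonneg (by linarith)] at hbad; exact hbad
            have hTle : T ≤ A * (t - m k) := by
              rw [← hAh]
              exact mul_le_mul_of_nonneg_left this hApos.le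
            have := hT1 _ hTle
            simpa [hinddef, hmk] using this
          · push_neg at hmk
            have : t - m k ≤ -(h/4) := by
              rw [abs_of_neg (by linarith)] at hbad; linarith
            have hTle : A * (t - m k) ≤ -T := by
              rw [← hAh]
              nlinarith
            have := hT0 _ hTle
            simpa [hinddef, not_le.mpr hmk] using this
        exact mul_le_mul_of_nonneg_left hΨη (abs_nonneg _)
    refine (Finset.sum_le_sum hpt).trans ?_
    rw [Finset.sum_add_distrib]
    have e1 : ∑ k ∈ range (n+1), |c k| * η = S * η := by
      rw [hSdef, Finset.sum_mul]
    have e2 : S * η ≤ ε/4 := by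
      rw [hηdef]
      rw [mul_div_assoc']
      rw [div_le_div_iff₀ (by positivity) (by norm_num)]
      nlinarith
    have e3 : ∑ k ∈ range (n+1), (if |t - m k| < h/4 then ε/4 else 0) ≤ ε/4 := by
      rw [← Finset.sum_filter]
      rw [Finset.sum_const]
      have hcard : ((range (n+1)).filter (fun k => |t - m k| < h/4)).card ≤ 1 := by
        rw [Finset.card_le_one]
        intro a ha b hb
        simp only [Finset.mem_filter, Finset.mem_range] at ha hb
        have hne0 : ∀ k, |t - m k| < h/4 → k ≠ 0 := by
          intro k hbad h0
          rw [h0] at hbad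
          have hm0 : m 0 = -M-1 := if_pos rfl
          rw [hm0] at hbad
          have h14 : h/4 ≤ 1 := by linarith
          have he : t - (-M-1) = t + M + 1 := by ring
          rw [he, abs_of_nonneg (by linarith)] at hbad
          linarith
        have ha0 := hne0 a ha.2
        have hb0 := hne0 b hb.2
        have hma : m a = -M + ((a:ℝ) - 1/2)*h := if_neg ha0
        have hmb : m b = -M + ((b:ℝ) - 1/2)*h := if_neg hb0
        have habs : |(a:ℝ) - (b:ℝ)| * h < h/2 := by
          have hmab : m a - m b = ((a:ℝ) - (b:ℝ)) * h := by rw [hma, hmb]; ring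
          calc |(a:ℝ) - (b:ℝ)| * h = |m a - m b| := by
                rw [hmab, abs_mul, abs_of_pos hh]
          _ = |(t - m b) - (t - m a)| := by ring_nf
          _ ≤ |t - m b| + |t - m a| := abs_sub _ _
          _ < h/2 := by linarith [ha.2, hb.2]
        have hab1 : |(a:ℝ) - (b:ℝ)| < 1 := by
          by_contra hcon
          push_neg at hcon
          nlinarith
        rw [abs_sub_lt_iff] at hab1
        have h1 : (a:ℝ) < (b:ℝ) + 1 := by linarith [hab1.1]
        have h2 : (b:ℝ) < (a:ℝ) + 1 := by linarith [hab1.2]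
        have : a < b + 1 := by exact_mod_cast h1
        have : b < a + 1 := by exact_mod_cast h2
        omega
      rw [nsmul_eq_mul]
      have hc1 : (((range (n+1)).filter (fun k => |t - m k| < h/4)).card : ℝ) ≤ 1 := by
        exact_mod_cast hcard
      nlinarith
    rw [e1]
    linarith
  -- put it together
  have := abs_sub_le (g t) (∑ k ∈ range (n+1), c k * ind k)
    (∑ k ∈ range (n+1), c k * Ψ (A * t + -(A * m k)))
  rw [hstep] at this
  have h2 : |∑ k ∈ range (n+1), c k * ind k
      - ∑ k ∈ range (n+1), c k * Ψ (A * t + -(A * m k))| ≤ ε/2 := by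
    rw [abs_sub_comm]; exact hnet
  rw [hstep] at h2
  calc |g t - ∑ k ∈ range (n+1), c k * Ψ (A * t + -(A * m k))|
      ≤ |g t - G J| + |G J - ∑ k ∈ range (n+1), c k * Ψ (A * t + -(A * m k))| := this
  _ ≤ ε/4 + ε/2 := add_le_add hgJ h2
  _ < ε := by linarith

lemma cosMulCos (u v : ℝ) :
    Real.cos u * Real.cos v = 1/2 * Real.cos (u + v) + 1/2 * Real.cos (u - v) := by
  rw [Real.cos_add, Real.cos_sub]; ring

set_option maxHeartbeats 1000000 in
/-- Single-hidden-layer feedforward networks with a squashing activation are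
uniformly dense on compacta in `C(ℝ^r)`. -/
theorem universal_approximation_on_compacta
    (Ψ : ℝ → ℝ) (hΨ : IsSquashing Ψ) (r : ℕ) (hr : 1 ≤ r)
    (f : (Fin r → ℝ) → ℝ) (hf : Continuous f)
    (K : Set (Fin r → ℝ)) (hK : IsCompact K)
    (ε : ℝ) (hε : 0 < ε) :
    ∃ (N : ℕ) (_ : 0 < N) (β : Fin N → ℝ) (w : Fin N → Fin r → ℝ) (θ : Fin N → ℝ),
      ∀ x ∈ K, |f x - ∑ i, β i * Ψ (∑ j, w i j * x j + θ i)| < ε := by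
  classical
  haveI : CompactSpace K := isCompact_iff_compactSpace.mp hK
  -- the cosine "generators"
  set Φ : (Fin r → ℝ) × ℝ → C(K, ℝ) := fun p =>
    ⟨fun x => Real.cos (∑ j, p.1 j * (x : Fin r → ℝ) j + p.2),
      Real.continuous_cos.comp ((continuous_finset_sum _ fun j _ =>
        continuous_const.mul ((continuous_apply j).comp continuous_subtype_val)).add
        continuous_const)⟩ with hΦdef
  have hΦapp : ∀ p (x : K), Φ p x = Real.cos (∑ j, p.1 j * (x : Fin r → ℝ) j + p.2) :=
    fun p x => rfl
  -- the span of the generators is closed under multiplication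
  have hmulgen : ∀ p q, Φ p * Φ q ∈ Submodule.span ℝ (Set.range Φ) := by
    intro p q
    have hpq : Φ p * Φ q = (1/2 : ℝ) • Φ (p.1 + q.1, p.2 + q.2)
        + (1/2 : ℝ) • Φ (p.1 - q.1, p.2 - q.2) := by
      ext x
      simp only [ContinuousMap.mul_apply, ContinuousMap.add_apply, ContinuousMap.smul_apply,
        smul_eq_mul, hΦapp]
      have e1 : ∑ j, (p.1 + q.1) j * (x : Fin r → ℝ) j + (p.2 + q.2)
          = (∑ j, p.1 j * (x : Fin r → ℝ) j + p.2)
            + (∑ j, q.1 j * (x : Fin r → ℝ) j + q.2) := by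
        simp only [Pi.add_apply, add_mul, Finset.sum_add_distrib]
        ring
      have e2 : ∑ j, (p.1 - q.1) j * (x : Fin r → ℝ) j + (p.2 - q.2)
          = (∑ j, p.1 j * (x : Fin r → ℝ) j + p.2)
            - (∑ j, q.1 j * (x : Fin r → ℝ) j + q.2) := by
        simp only [Pi.sub_apply, sub_mul, Finset.sum_sub_distrib]
        ring
      rw [e1, e2]
      exact cosMulCos _ _
    rw [hpq]
    exact Submodule.add_mem _ (Submodule.smul_mem _ _ (Submodule.subset_span ⟨_, rfl⟩))
      (Submodule.smul_mem _ _ (Submodule.subset_span ⟨_, rfl⟩))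
  have hmul : ∀ a ∈ Submodule.span ℝ (Set.range Φ), ∀ b ∈ Submodule.span ℝ (Set.range Φ),
      a * b ∈ Submodule.span ℝ (Set.range Φ) := by
    intro a ha
    induction ha using Submodule.span_induction with
    | mem u hu =>
      intro b hb
      induction hb using Submodule.span_induction with
      | mem v hv =>
        obtain ⟨p, rfl⟩ := hu
        obtain ⟨q, rfl⟩ := hv
        exact hmulgen p q
      | zero => simpa using Submodule.zero_mem _
      | add y z hy hz ihy ihz => rw [mul_add]; exact Submodule.add_mem _ ihy ihz
      | smul c y hy ihy => rw [mul_smul_comm]; exact Submodule.smul_mem _ _ ihy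
    | zero => intro b hb; simpa using Submodule.zero_mem _
    | add y z hy hz ihy ihz =>
      intro b hb
      rw [add_mul]; exact Submodule.add_mem _ (ihy b hb) (ihz b hb)
    | smul c y hy ihy =>
      intro b hb
      rw [smul_mul_assoc]; exact Submodule.smul_mem _ _ (ihy b hb)
  have hone : (1 : C(K, ℝ)) ∈ Submodule.span ℝ (Set.range Φ) := by
    have h1 : (1 : C(K, ℝ)) = Φ (0, 0) := by
      ext x
      simp [hΦapp]
    rw [h1]
    exact Submodule.subset_span ⟨_, rfl⟩
  set Alg : Subalgebra ℝ C(K, ℝ) :=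
    (Submodule.span ℝ (Set.range Φ)).toSubalgebra hone (fun a b ha hb => hmul a ha b hb)
    with hAlgdef
  -- it separates points
  have hsep : Alg.SeparatesPoints := by
    intro x y hxy
    have hexj : ∃ j, (x : Fin r → ℝ) j ≠ (y : Fin r → ℝ) j := by
      by_contra hc
      push_neg at hc
      exact hxy (Subtype.ext (funext hc))
    obtain ⟨j, hj⟩ := hexj
    set xj := (x : Fin r → ℝ) j with hxj
    set yj := (y : Fin r → ℝ) j with hyj
    set D := |xj| + |yj| + 1 with hD
    have hDpos : 0 < D := by positivity
    set s := Real.pi / (2 * D) with hs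
    have hspos : 0 < s := by
      rw [hs]; exact div_pos Real.pi_pos (by positivity)
    set p : (Fin r → ℝ) × ℝ := (fun j' => if j' = j then s else 0, Real.pi/2) with hp
    have hsum : ∀ z : K, ∑ j', p.1 j' * (z : Fin r → ℝ) j' = s * (z : Fin r → ℝ) j := by
      intro z
      rw [Finset.sum_eq_single j]
      · simp [hp]
      · intro b _ hb; simp [hp, hb]
      · intro hj'; exact absurd (Finset.mem_univ j) hj'
    have hsD : s * D = Real.pi / 2 := by
      rw [hs]; field_simp
    have hx1 : |s * xj| < Real.pi/2 := by
      rw [abs_mul, abs_of_pos hspos, ← hsD]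
      have hlt : |xj| < D := by rw [hD]; linarith [abs_nonneg yj]
      exact mul_lt_mul_of_pos_left hlt hspos
    have hy1 : |s * yj| < Real.pi/2 := by
      rw [abs_mul, abs_of_pos hspos, ← hsD]
      have hlt : |yj| < D := by rw [hD]; linarith [abs_nonneg xj]
      exact mul_lt_mul_of_pos_left hlt hspos
    refine ⟨(Φ p : C(K, ℝ)), ⟨Φ p, Submodule.subset_span ⟨p, rfl⟩, rfl⟩, ?_⟩
    have hvx : (Φ p) x = Real.cos (s * xj + Real.pi/2) := by
      rw [hΦapp, hsum x]
    have hvy : (Φ p) y = Real.cos (s * yj + Real.pi/2) := by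
      rw [hΦapp, hsum y]
    intro heq
    rw [hvx, hvy] at heq
    obtain ⟨ha1, ha2⟩ := abs_lt.mp hx1
    obtain ⟨hb1, hb2⟩ := abs_lt.mp hy1
    have hpi := Real.pi_pos
    have heq2 := Real.injOn_cos ⟨by linarith, by linarith⟩ ⟨by linarith, by linarith⟩ heq
    have : s * xj = s * yj := by linarith
    exact hj (mul_left_cancel₀ (ne_of_gt hspos) this)
  -- Stone–Weierstrass
  have hcl : Alg.topologicalClosure = ⊤ :=
    ContinuousMap.subalgebra_topologicalClosure_eq_top_of_separatesPoints Alg hsep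
  set fK : C(K, ℝ) := ⟨fun x => f x, hf.comp continuous_subtype_val⟩ with hfKdef
  have hfK : fK ∈ closure (Alg : Set C(K, ℝ)) := by
    have h1 : fK ∈ Alg.topologicalClosure := by rw [hcl]; trivial
    rw [← Subalgebra.topologicalClosure_coe]
    exact h1
  obtain ⟨P, hPA, hPd⟩ := Metric.mem_closure_iff.mp hfK (ε/2) (by positivity)
  have hPW : P ∈ Submodule.span ℝ (Set.range Φ) := hPA
  obtain ⟨n₁, cc, gg, hsumP⟩ := Submodule.mem_span_set'.mp hPW
  choose pr hpr using fun i : Fin n₁ => (gg i).2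
  -- bound the affine maps on K
  have hbound : ∀ i : Fin n₁, ∃ Mi : ℝ, 0 < Mi ∧
      ∀ x ∈ K, |∑ j, (pr i).1 j * x j + (pr i).2| ≤ Mi := by
    intro i
    have hcont : ContinuousOn (fun x : Fin r → ℝ => ∑ j, (pr i).1 j * x j + (pr i).2) K :=
      ((continuous_finset_sum _ fun j _ =>
        continuous_const.mul (continuous_apply j)).add continuous_const).continuousOn
    obtain ⟨C, hC⟩ := hK.exists_bound_of_continuousOn hcont
    refine ⟨max C 1, lt_of_lt_of_le one_pos (le_max_right _ _), fun x hx => ?_⟩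
    have := hC x hx
    rw [Real.norm_eq_abs] at this
    exact this.trans (le_max_left _ _)
  choose Mi hMipos hMi using hbound
  -- one-dimensional approximation of cosine by networks
  have happ := fun i : Fin n₁ => one_dim_approx Ψ hΨ Real.cos Real.continuous_cos (Mi i)
    (ε/(2*(n₁+1)*(|cc i|+1))) (hMipos i) (by positivity)
  choose nn cf af bf hnet using happ
  -- assemble everything via a sigma type
  set N₀ := Fintype.card (Σ i : Fin n₁, Fin (nn i)) with hN₀
  set e : (Σ i : Fin n₁, Fin (nn i)) ≃ Fin N₀ := Fintype.equivFin _ with he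
  set βs : (Σ i : Fin n₁, Fin (nn i)) → ℝ := fun q => cc q.1 * cf q.1 q.2 with hβs
  set ws : (Σ i : Fin n₁, Fin (nn i)) → Fin r → ℝ :=
    fun q => fun j => af q.1 q.2 * (pr q.1).1 j with hws
  set θs : (Σ i : Fin n₁, Fin (nn i)) → ℝ :=
    fun q => af q.1 q.2 * (pr q.1).2 + bf q.1 q.2 with hθs
  refine ⟨N₀ + 1, Nat.succ_pos _, Fin.cons 0 (fun q => βs (e.symm q)),
    Fin.cons 0 (fun q => ws (e.symm q)), Fin.cons 0 (fun q => θs (e.symm q)), ?_⟩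
  intro x hx
  rw [Fin.sum_univ_succ]
  simp only [Fin.cons_zero, Fin.cons_succ, zero_mul, zero_add]
  have hflat : ∑ q : Fin N₀, βs (e.symm q) * Ψ (∑ j, ws (e.symm q) j * x j + θs (e.symm q))
      = ∑ i : Fin n₁, ∑ k : Fin (nn i), cc i * cf i k
          * Ψ (af i k * (∑ j, (pr i).1 j * x j + (pr i).2) + bf i k) := by
    rw [Equiv.sum_comp e.symm (fun q => βs q * Ψ (∑ j, ws q j * x j + θs q))]
    rw [← Finset.univ_sigma_univ, Finset.sum_sigma]
    refine Finset.sum_congr rfl fun i _ => Finset.sum_congr rfl fun k _ => ?_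
    have hargsum : ∑ j, ws ⟨i, k⟩ j * x j + θs ⟨i, k⟩
        = af i k * (∑ j, (pr i).1 j * x j + (pr i).2) + bf i k := by
      have h1 : ∑ j, ws ⟨i, k⟩ j * x j = af i k * ∑ j, (pr i).1 j * x j := by
        rw [Finset.mul_sum]
        exact Finset.sum_congr rfl fun j _ => by simp only [hws]; ring
      rw [h1]
      simp only [hθs]
      ring
    rw [hargsum]
  rw [hflat]
  -- the value of P at x
  have hPx : P ⟨x, hx⟩ = ∑ i : Fin n₁,
      cc i * Real.cos (∑ j, (pr i).1 j * x j + (pr i).2) := by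
    rw [← hsumP]
    simp only [ContinuousMap.coe_sum, Finset.sum_apply, ContinuousMap.coe_smul, Pi.smul_apply,
      smul_eq_mul]
    refine Finset.sum_congr rfl fun i _ => ?_
    rw [← hpr i, hΦapp]
  -- the distance from f to P at x
  have hfP : |f x - P ⟨x, hx⟩| < ε/2 := by
    have h1 := ContinuousMap.dist_apply_le_dist (f := fK) (g := P) (⟨x, hx⟩ : K)
    have h2 : fK (⟨x, hx⟩ : K) = f x := rfl
    rw [h2, Real.dist_eq] at h1
    exact lt_of_le_of_lt h1 hPd
  -- each cosine term is well approximated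
  have hterm : ∀ i : Fin n₁,
      |cc i * Real.cos (∑ j, (pr i).1 j * x j + (pr i).2)
        - ∑ k : Fin (nn i), cc i * cf i k
            * Ψ (af i k * (∑ j, (pr i).1 j * x j + (pr i).2) + bf i k)|
      ≤ ε/(2*(n₁+1)) := by
    intro i
    set t := ∑ j, (pr i).1 j * x j + (pr i).2 with ht
    have hti : t ∈ Set.Icc (-(Mi i)) (Mi i) := by
      have := hMi i x hx
      rw [abs_le] at this
      exact ⟨this.1, this.2⟩
    have h2 := hnet i t hti
    have hfac : ∑ k : Fin (nn i), cc i * cf i k * Ψ (af i k * t + bf i k)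
        = cc i * ∑ k : Fin (nn i), cf i k * Ψ (af i k * t + bf i k) := by
      rw [Finset.mul_sum]
      exact Finset.sum_congr rfl fun k _ => by ring
    rw [hfac, ← mul_sub, abs_mul]
    have h3 : |cc i| * |Real.cos t - ∑ k : Fin (nn i), cf i k * Ψ (af i k * t + bf i k)|
        ≤ |cc i| * (ε/(2*(n₁+1)*(|cc i|+1))) :=
      mul_le_mul_of_nonneg_left h2.le (abs_nonneg _)
    refine h3.trans ?_
    rw [← div_div]
    rw [mul_div_assoc']
    rw [div_le_iff₀ (by positivity : (0:ℝ) < |cc i| + 1)]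
    have hqpos : 0 < ε/(2*((n₁:ℝ)+1)) := by positivity
    nlinarith [abs_nonneg (cc i)]
  -- combine the estimates
  have hsum2 : |P ⟨x, hx⟩ - ∑ i : Fin n₁, ∑ k : Fin (nn i), cc i * cf i k
      * Ψ (af i k * (∑ j, (pr i).1 j * x j + (pr i).2) + bf i k)|
      ≤ (n₁ : ℝ) * (ε/(2*(n₁+1))) := by
    rw [hPx, ← Finset.sum_sub_distrib]
    refine (Finset.abs_sum_le_sum_abs _ _).trans ?_
    refine (Finset.sum_le_sum fun i _ => hterm i).trans ?_
    rw [Finset.sum_const, Finset.card_univ, Fintype.card_fin, nsmul_eq_mul]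
  have hlast : (n₁ : ℝ) * (ε/(2*(n₁+1))) < ε/2 := by
    rw [mul_div_assoc']
    rw [div_lt_div_iff₀ (by positivity) (by norm_num)]
    nlinarith [Nat.cast_nonneg (α := ℝ) n₁]
  have htri := abs_sub_le (f x) (P ⟨x, hx⟩)
    (∑ i : Fin n₁, ∑ k : Fin (nn i), cc i * cf i k
      * Ψ (af i k * (∑ j, (pr i).1 j * x j + (pr i).2) + bf i k))
  linarith
end

section
/- For every squashing function Ψ : ℝ → ℝ, every dimension r ≥ 1, every Borel probability measure μ on ℝ^r, every Borel measurable function f : ℝ^r → ℝ, and every ε > 0, there exist a positive integer N, coefficients β₁,…,β_N ∈ ℝ, weight vectors w₁,…,w_N ∈ ℝ^r, and biases θ₁,…,θ_N ∈ ℝ such that, setting g(x) = ∑_{i=1}^N β_i Ψ(⟨w_i, x⟩ + θ_i), one has μ({x ∈ ℝ^r : |f(x) − g(x)| > ε}) < ε. That is, single-hidden-layer networks are dense in the space of Borel measurable functions on ℝ^r with respect to the metric of convergence in probability ρ_μ. -/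
open Filter

set_option maxHeartbeats 1600000

open MeasureTheory

/-- 1-D core: any continuous function is uniformly approximable on a compact interval
by sums of squashers. -/
lemma ridge1d {Ψ : ℝ → ℝ} (hΨ : IsSquashing Ψ) (φ : ℝ → ℝ) (hφ : Continuous φ)
    (M ε : ℝ) (hε : 0 < ε) :
    ∃ (n : ℕ) (β lam θ : Fin n → ℝ),
      ∀ t' ∈ Set.Icc (-M) M, |φ t' - ∑ i, β i * Ψ (lam i * t' + θ i)| ≤ ε := by
  obtain ⟨hmono, hbd, htop, hbot⟩ := hΨ
  set M' : ℝ := max M 1 with hM'def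
  have hM' : 0 < M' := lt_of_lt_of_le one_pos (le_max_right _ _)
  have hMM' : M ≤ M' := le_max_left _ _
  set ε8 : ℝ := ε / 8 with hε8def
  have hε8 : 0 < ε8 := by positivity
  -- uniform continuity on the compact interval
  have hc : IsCompact (Set.Icc (-M') M') := isCompact_Icc
  have huc : UniformContinuousOn φ (Set.Icc (-M') M') :=
    hc.uniformContinuousOn_of_continuous hφ.continuousOn
  rw [Metric.uniformContinuousOn_iff] at huc
  obtain ⟨δ, hδ, hδφ⟩ := huc ε8 hε8
  -- choose the number of steps
  set n : ℕ := ⌈2 * M' / δ⌉₊ + 1 with hndef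
  have hn0 : 0 < n := Nat.succ_pos _
  have hnR : (0:ℝ) < n := by exact_mod_cast hn0
  have hnδ : 2 * M' / δ < n := by
    calc 2 * M' / δ ≤ ⌈2 * M' / δ⌉₊ := Nat.le_ceil _
    _ < n := by exact_mod_cast Nat.lt_succ_self _
  set Δ : ℝ := 2 * M' / n with hΔdef
  have hΔ : 0 < Δ := by positivity
  have hΔδ : Δ < δ := by
    rw [hΔdef, div_lt_iff₀ hnR]
    have := (div_lt_iff₀ hδ).mp hnδ
    linarith [this]
  have hnΔ : (n:ℝ) * Δ = 2 * M' := by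
    rw [hΔdef]; field_simp
  -- grid points
  set t : ℕ → ℝ := fun k => -M' + k * Δ with htdef
  have ht_mem : ∀ k ≤ n, t k ∈ Set.Icc (-M') M' := by
    intro k hk
    constructor
    · have : (0:ℝ) ≤ k * Δ := by positivity
      simp only [htdef]; linarith
    · have : (k:ℝ) * Δ ≤ (n:ℝ) * Δ := by
        have : (k:ℝ) ≤ n := by exact_mod_cast hk
        nlinarith
      simp only [htdef]; linarith [hnΔ]
  set c : ℕ → ℝ := fun i => φ (t (i+1)) - φ (t i) with hcdef
  have hcbd : ∀ i < n, |c i| ≤ ε8 := by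
    intro i hi
    have h1 : t (i+1) ∈ Set.Icc (-M') M' := ht_mem _ (by omega)
    have h2 : t i ∈ Set.Icc (-M') M' := ht_mem _ (by omega)
    have hd : dist (t (i+1)) (t i) < δ := by
      rw [Real.dist_eq]
      have : t (i+1) - t i = Δ := by simp [htdef]; push_cast; ring
      rw [this, abs_of_pos hΔ]; exact hΔδ
    have := hδφ _ h1 _ h2 hd
    rw [Real.dist_eq] at this
    exact le_of_lt this
  -- the η threshold
  set η : ℝ := ε8 / ((n:ℝ) * ε8 + |φ (t 0)| + 1) with hηdef
  have hden : (0:ℝ) < (n:ℝ) * ε8 + |φ (t 0)| + 1 := by positivity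
  have hη : 0 < η := by positivity
  -- thresholds for Ψ
  have hT : ∀ᶠ u in atTop, 1 - η < Ψ u := htop.eventually (eventually_gt_nhds (by linarith))
  have hB : ∀ᶠ u in atBot, Ψ u < η := hbot.eventually (eventually_lt_nhds hη)
  obtain ⟨T, hTspec⟩ := eventually_atTop.mp hT
  obtain ⟨B, hBspec⟩ := eventually_atBot.mp hB
  -- the slope
  set lam : ℝ := max T (max (-B) 1) / Δ with hlamdef
  have hlamΔ : lam * Δ = max T (max (-B) 1) := div_mul_cancel₀ _ (ne_of_gt hΔ)
  have hlampos : 0 < lam := by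
    apply div_pos _ hΔ
    exact lt_of_lt_of_le one_pos (le_trans (le_max_right _ _) (le_max_right _ _))
  have hlamT : T ≤ lam * Δ := by rw [hlamΔ]; exact le_max_left _ _
  have hlamB : -(lam * Δ) ≤ B := by
    rw [hlamΔ]
    have : -B ≤ max T (max (-B) 1) := le_trans (le_max_left _ _) (le_max_right _ _)
    linarith
  have hcspec : ∀ i, c i = φ (t (i+1)) - φ (t i) := fun _ => rfl
  clear_value M' ε8 n Δ t c η lam
  -- the network
  refine ⟨n + 1, Fin.cons (φ (t 0)) (fun i : Fin n => c i),
    Fin.cons 0 (fun _ : Fin n => lam), Fin.cons T (fun i : Fin n => -(lam * t (i.1+1))), ?_⟩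
  intro t' ht'
  have ht'M : t' ∈ Set.Icc (-M') M' := by
    obtain ⟨h1, h2⟩ := ht'
    exact ⟨by linarith, by linarith⟩
  obtain ⟨ht'l, ht'r⟩ := ht'M
  rw [Fin.sum_univ_succ]
  simp only [Fin.cons_zero, Fin.cons_succ]
  have hsum : ∑ i : Fin n, c i.1 * Ψ (lam * t' + -(lam * t (i.1+1)))
      = ∑ i ∈ Finset.range n, c i * Ψ (lam * t' + -(lam * t (i+1))) :=
    Fin.sum_univ_eq_sum_range (fun i => c i * Ψ (lam * t' + -(lam * t (i+1)))) n
  -- the index j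
  set j : ℕ := ⌊(t' + M') / Δ⌋₊ with hjdef
  have hnum0 : 0 ≤ (t' + M') := by linarith
  have hjn : j ≤ n := by
    have h1 : (t' + M') / Δ ≤ (n:ℝ) := by
      rw [div_le_iff₀ hΔ]; rw [hnΔ] at *; nlinarith [hnΔ]
    calc j ≤ ⌊(n:ℝ)⌋₊ := Nat.floor_mono h1
    _ = n := Nat.floor_natCast n
  have htj_le : t j ≤ t' := by
    have h1 : (j:ℝ) ≤ (t' + M') / Δ := Nat.floor_le (by positivity)
    have := (le_div_iff₀ hΔ).mp h1
    simp only [htdef]; linarith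
  have htj_lt : t' < t (j+1) := by
    have h1 : (t' + M') / Δ < (j:ℝ) + 1 := Nat.lt_floor_add_one _
    have := (div_lt_iff₀ hΔ).mp h1
    simp only [htdef]; push_cast; nlinarith
  clear_value j
  -- step error
  have hstep : |φ t' - φ (t j)| ≤ ε8 := by
    have h1 : t j ∈ Set.Icc (-M') M' := ht_mem _ hjn
    have hd : dist t' (t j) < δ := by
      rw [Real.dist_eq, abs_of_nonneg (by linarith)]
      have : t (j+1) - t j = Δ := by simp [htdef]; push_cast; ring
      linarith
    have := hδφ _ ⟨ht'l, ht'r⟩ _ h1 hd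
    rw [Real.dist_eq] at this
    exact le_of_lt this
  -- telescoping
  have htel : φ (t j) = φ (t 0) + ∑ i ∈ Finset.range n, c i * (if i < j then (1:ℝ) else 0) := by
    have h1 : ∑ i ∈ Finset.range n, c i * (if i < j then (1:ℝ) else 0)
        = ∑ i ∈ Finset.range j, c i := by
      rw [Finset.sum_congr rfl (fun i _ => by rw [mul_ite, mul_one, mul_zero]),
        ← Finset.sum_filter]
      congr 1
      ext k
      simp only [Finset.mem_filter, Finset.mem_range]
      omega
    rw [h1]
    have h2 : ∑ i ∈ Finset.range j, c i = φ (t j) - φ (t 0) := by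
      simp only [hcspec]
      exact Finset.sum_range_sub (fun k => φ (t k)) j
    rw [h2]; ring
  -- decompose the error
  set A : ℝ := φ t' - φ (t j) with hAdef
  set Bt : ℝ := φ (t 0) * (1 - Ψ (0 * t' + T)) with hBtdef
  set C : ℝ := ∑ i ∈ Finset.range n,
      c i * ((if i < j then (1:ℝ) else 0) - Ψ (lam * t' + -(lam * t (i+1)))) with hCdef
  have hdecomp : φ t' - (φ (t 0) * Ψ (0 * t' + T)
      + ∑ i ∈ Finset.range n, c i * Ψ (lam * t' + -(lam * t (i+1)))) = A + Bt + C := by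
    have hC' : C = (∑ i ∈ Finset.range n, c i * (if i < j then (1:ℝ) else 0))
        - ∑ i ∈ Finset.range n, c i * Ψ (lam * t' + -(lam * t (i+1))) := by
      rw [hCdef, ← Finset.sum_sub_distrib]
      exact Finset.sum_congr rfl fun i _ => by ring
    rw [hC', hAdef, hBtdef, htel]; ring
  -- bound Bt
  have hΨT : 1 - η < Ψ (0 * t' + T) := by
    rw [zero_mul, zero_add]; exact hTspec T le_rfl
  have hBt : |Bt| ≤ |φ (t 0)| * η := by
    rw [hBtdef, abs_mul]
    apply mul_le_mul_of_nonneg_left _ (abs_nonneg _)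
    rw [abs_le]
    have := (hbd (0 * t' + T)).2
    constructor <;> linarith
  -- bound C termwise
  have hterm : ∀ i ∈ Finset.range n,
      |c i * ((if i < j then (1:ℝ) else 0) - Ψ (lam * t' + -(lam * t (i+1))))|
      ≤ (if i + 1 = j ∨ i = j then ε8 else 0) + η * |c i| := by
    intro i hi
    rw [Finset.mem_range] at hi
    rw [abs_mul]
    by_cases hcase : i + 1 = j ∨ i = j
    · rw [if_pos hcase]
      have h1 : |(if i < j then (1:ℝ) else 0) - Ψ (lam * t' + -(lam * t (i+1)))| ≤ 1 := by
        obtain ⟨h0, h1⟩ := hbd (lam * t' + -(lam * t (i+1)))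
        split <;> (rw [abs_le]; constructor <;> linarith)
      have := mul_le_mul (hcbd i hi) h1 (abs_nonneg _) (le_of_lt hε8)
      rw [mul_one] at this
      have h2 : (0:ℝ) ≤ η * |c i| := by positivity
      linarith
    · rw [if_neg hcase]
      push_neg at hcase
      have hkey : |(if i < j then (1:ℝ) else 0) - Ψ (lam * t' + -(lam * t (i+1)))| ≤ η := by
        by_cases hij : i < j
        · -- i + 1 < j so the squasher is ≈ 1
          have hij2 : i + 1 < j := by omega
          have hgap : t j - t (i+1) ≥ Δ := by
            simp only [htdef]
            have : ((i:ℝ) + 1) + 1 ≤ (j:ℝ) := by exact_mod_cast hij2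
            push_cast
            nlinarith
          have harg : T ≤ lam * t' + -(lam * t (i+1)) := by
            have h2 : Δ ≤ t' - t (i+1) := by linarith
            nlinarith
          have := hTspec _ harg
          obtain ⟨_, h1⟩ := hbd (lam * t' + -(lam * t (i+1)))
          rw [if_pos hij, abs_le]
          constructor <;> linarith
        · -- i > j so the squasher is ≈ 0
          have hij2 : j + 1 ≤ i := by omega
          have hgap : t (i+1) - t (j+1) ≥ Δ := by
            simp only [htdef]
            have : (j:ℝ) + 1 + 1 ≤ (i:ℝ) + 1 := by exact_mod_cast by omega
            push_cast
            nlinarith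
          have harg : lam * t' + -(lam * t (i+1)) ≤ B := by
            have h2 : Δ ≤ t (i+1) - t' := by linarith
            nlinarith
          have := hBspec _ harg
          obtain ⟨h0, _⟩ := hbd (lam * t' + -(lam * t (i+1)))
          rw [if_neg hij, abs_le]
          constructor <;> linarith
      calc |c i| * |(if i < j then (1:ℝ) else 0) - Ψ (lam * t' + -(lam * t (i+1)))|
          ≤ |c i| * η := mul_le_mul_of_nonneg_left hkey (abs_nonneg _)
        _ = 0 + η * |c i| := by ring
  have hC : |C| ≤ 2 * ε8 + η * ((n:ℝ) * ε8) := by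
    have h1 : |C| ≤ ∑ i ∈ Finset.range n,
        ((if i + 1 = j ∨ i = j then ε8 else 0) + η * |c i|) :=
      le_trans (Finset.abs_sum_le_sum_abs _ _) (Finset.sum_le_sum hterm)
    have h2 : ∑ i ∈ Finset.range n, (if i + 1 = j ∨ i = j then ε8 else 0) ≤ 2 * ε8 := by
      rw [← Finset.sum_filter]
      have hsub : (Finset.range n).filter (fun i => i + 1 = j ∨ i = j) ⊆ {j - 1, j} := by
        intro k hk
        simp only [Finset.mem_filter, Finset.mem_range] at hk
        simp only [Finset.mem_insert, Finset.mem_singleton]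
        omega
      calc ∑ _i ∈ (Finset.range n).filter (fun i => i + 1 = j ∨ i = j), ε8
          = ((Finset.range n).filter (fun i => i + 1 = j ∨ i = j)).card * ε8 := by
            rw [Finset.sum_const, nsmul_eq_mul]
        _ ≤ 2 * ε8 := by
            apply mul_le_mul_of_nonneg_right _ hε8.le
            have := Finset.card_le_card hsub
            have h22 : ({j - 1, j} : Finset ℕ).card ≤ 2 := Finset.card_insert_le _ _ |>.trans (by simp)
            exact_mod_cast le_trans this h22
      done
    have h3 : ∑ i ∈ Finset.range n, η * |c i| ≤ η * ((n:ℝ) * ε8) := by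
      rw [← Finset.mul_sum]
      apply mul_le_mul_of_nonneg_left _ hη.le
      calc ∑ i ∈ Finset.range n, |c i| ≤ ∑ _i ∈ Finset.range n, ε8 :=
            Finset.sum_le_sum (fun i hi => hcbd i (Finset.mem_range.mp hi))
        _ = (n:ℝ) * ε8 := by rw [Finset.sum_const, nsmul_eq_mul, Finset.card_range]
    rw [Finset.sum_add_distrib] at h1
    linarith
  -- total η bound
  have hηtot : η * ((n:ℝ) * ε8) + |φ (t 0)| * η ≤ ε8 := by
    have heq : η * ((n:ℝ) * ε8 + |φ (t 0)| + 1) = ε8 := by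
      rw [hηdef]; field_simp
    nlinarith
  -- conclude
  rw [hsum, hdecomp]
  calc |A + Bt + C| ≤ |A| + |Bt| + |C| := abs_add_three _ _ _
    _ ≤ ε8 + |φ (t 0)| * η + (2 * ε8 + η * ((n:ℝ) * ε8)) := by
        gcongr
    _ ≤ ε8 + 2 * ε8 + ε8 := by linarith
    _ ≤ ε := by rw [hε8def]; linarith

/-- Networks uniformly approximate continuous functions on compact sets. -/
lemma net_on_compact {Ψ : ℝ → ℝ} (hΨ : IsSquashing Ψ) {r : ℕ}
    (K : Set (Fin r → ℝ)) (hK : IsCompact K) (g : (Fin r → ℝ) → ℝ) (hg : Continuous g)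
    (ε : ℝ) (hε : 0 < ε) :
    ∃ (N : ℕ) (β : Fin N → ℝ) (w : Fin N → Fin r → ℝ) (θ : Fin N → ℝ),
      ∀ x ∈ K, |g x - ∑ i, β i * Ψ (∑ j, w i j * x j + θ i)| ≤ ε := by
  haveI : CompactSpace K := isCompact_iff_compactSpace.mp hK
  -- the exponential ridge functions
  set E : (Fin r → ℝ) → C(K, ℝ) := fun a =>
    ⟨fun x => Real.exp (∑ j, a j * (x : Fin r → ℝ) j), by
      apply Real.continuous_exp.comp
      exact continuous_finset_sum _ fun j _ =>
        continuous_const.mul ((continuous_apply j).comp continuous_subtype_val)⟩ with hEdef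
  have hEapp : ∀ (a : Fin r → ℝ) (x : K), E a x = Real.exp (∑ j, a j * (x : Fin r → ℝ) j) :=
    fun a x => rfl
  set V : Submodule ℝ C(K, ℝ) := Submodule.span ℝ (Set.range E) with hVdef
  have hmul_gen : ∀ a b : Fin r → ℝ, E a * E b = E (a + b) := by
    intro a b
    ext x
    simp only [ContinuousMap.mul_apply, hEapp, ← Real.exp_add, ← Finset.sum_add_distrib]
    congr 1
    exact Finset.sum_congr rfl fun j _ => by simp [Pi.add_apply]; ring
  have hone : (1 : C(K, ℝ)) ∈ V := by
    apply Submodule.subset_span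
    refine ⟨0, ?_⟩
    ext x
    simp [hEapp]
  have hmul : ∀ x y : C(K,ℝ), x ∈ V → y ∈ V → x * y ∈ V := by
    intro x y hx hy
    refine Submodule.span_induction₂
      (p := fun x y _ _ => x * y ∈ V) ?_ ?_ ?_ ?_ ?_ ?_ ?_ hx hy
    · rintro _ _ ⟨a, rfl⟩ ⟨b, rfl⟩
      rw [hmul_gen]
      exact Submodule.subset_span ⟨a + b, rfl⟩
    · intro y _; rw [zero_mul]; exact V.zero_mem
    · intro x _; rw [mul_zero]; exact V.zero_mem
    · intro x y z _ _ _ h1 h2; rw [add_mul]; exact V.add_mem h1 h2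
    · intro x y z _ _ _ h1 h2; rw [mul_add]; exact V.add_mem h1 h2
    · intro c x y _ _ h; rw [smul_mul_assoc]; exact V.smul_mem c h
    · intro c x y _ _ h; rw [mul_smul_comm]; exact V.smul_mem c h
  set A : Subalgebra ℝ C(K, ℝ) := V.toSubalgebra hone hmul with hAdef
  have hsep : A.SeparatesPoints := by
    intro x y hxy
    set a : Fin r → ℝ := (x : Fin r → ℝ) - (y : Fin r → ℝ) with hadef
    refine ⟨_, ⟨E a, Submodule.subset_span ⟨a, rfl⟩, rfl⟩, ?_⟩
    simp only [hEapp]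
    intro hcontr
    have h1 : ∑ j, a j * (x : Fin r → ℝ) j = ∑ j, a j * (y : Fin r → ℝ) j :=
      Real.exp_injective hcontr
    have h2 : ∑ j, ((x : Fin r → ℝ) j - (y : Fin r → ℝ) j)^2 = 0 := by
      have := sub_eq_zero_of_eq h1
      rw [← Finset.sum_sub_distrib] at this
      rw [← this]
      exact Finset.sum_congr rfl fun j _ => by simp [hadef]; ring
    have h3 : (x : Fin r → ℝ) = (y : Fin r → ℝ) := by
      funext j
      have hj := (Finset.sum_eq_zero_iff_of_nonneg
        (fun j _ => sq_nonneg ((x : Fin r → ℝ) j - (y : Fin r → ℝ) j))).mp h2 j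
        (Finset.mem_univ j)
      have := pow_eq_zero_iff (n := 2) (by norm_num) |>.mp hj
      linarith [sub_eq_zero.mp this]
    exact hxy (Subtype.ext h3)
  -- Stone–Weierstrass
  obtain ⟨p, hp⟩ := ContinuousMap.exists_mem_subalgebra_near_continuous_of_separatesPoints
    A hsep (fun x : K => g x) (hg.comp continuous_subtype_val) (ε/2) (by linarith)
  have hpV : (p : C(K, ℝ)) ∈ V := p.2
  rw [Submodule.mem_span_set'] at hpV
  obtain ⟨n, f, v, hv⟩ := hpV
  -- pick the exponents
  have hvE : ∀ i, ∃ a : Fin r → ℝ, E a = (v i : C(K, ℝ)) := fun i => (v i).2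
  choose a ha using hvE
  -- bounds for the linear functionals on K
  have hMa : ∀ i : Fin n, ∃ Mi : ℝ, ∀ x ∈ K, |∑ j, a i j * x j| ≤ Mi := by
    intro i
    obtain ⟨C, hC⟩ := hK.exists_bound_of_continuousOn
      (f := fun x : Fin r → ℝ => ∑ j, a i j * x j)
      (continuous_finset_sum _ fun j _ =>
        continuous_const.mul (continuous_apply j)).continuousOn
    exact ⟨C, fun x hx => hC x hx⟩
  choose Ma hMa using hMa
  -- per-term ridge approximations of exp
  have hridge : ∀ i : Fin n, ∃ (m : ℕ) (β lam θ : Fin m → ℝ),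
      ∀ t' ∈ Set.Icc (-(Ma i)) (Ma i),
        |Real.exp t' - ∑ k, β k * Ψ (lam k * t' + θ k)| ≤ (ε/2) / ((n+1) * (|f i| + 1)) := by
    intro i
    apply ridge1d hΨ Real.exp Real.continuous_exp
    have h1 : (0:ℝ) < (n:ℝ) + 1 := by positivity
    have h2 : (0:ℝ) < |f i| + 1 := by positivity
    positivity
  choose m βF lamF θF hF using hridge
  -- assemble
  set T := (Σ i : Fin n, Fin (m i)) with hTdef
  set e : Fin (Fintype.card T) ≃ T := (Fintype.equivFin T).symm with hedef
  refine ⟨Fintype.card T,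
    fun q => f (e q).1 * βF (e q).1 (e q).2,
    fun q => lamF (e q).1 (e q).2 • a (e q).1,
    fun q => θF (e q).1 (e q).2, ?_⟩
  intro x hx
  set x' : K := ⟨x, hx⟩ with hx'def
  -- rewrite the network sum as a double sum
  have hdot : ∀ (lv : ℝ) (av : Fin r → ℝ), ∑ j, (lv • av) j * x j = lv * ∑ j, av j * x j := by
    intro lv av
    rw [Finset.mul_sum]
    exact Finset.sum_congr rfl fun j _ => by simp [smul_eq_mul]; ring
  have hnet : ∑ q, (f (e q).1 * βF (e q).1 (e q).2) *
        Ψ (∑ j, (lamF (e q).1 (e q).2 • a (e q).1) j * x j + θF (e q).1 (e q).2)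
      = ∑ i : Fin n, f i * ∑ k : Fin (m i),
          βF i k * Ψ (lamF i k * (∑ j, a i j * x j) + θF i k) := by
    calc ∑ q, (f (e q).1 * βF (e q).1 (e q).2) *
        Ψ (∑ j, (lamF (e q).1 (e q).2 • a (e q).1) j * x j + θF (e q).1 (e q).2)
        = ∑ p : T, (f p.1 * βF p.1 p.2) *
            Ψ (lamF p.1 p.2 * (∑ j, a p.1 j * x j) + θF p.1 p.2) :=
          Fintype.sum_equiv e _ _ (fun q => by rw [hdot])
      _ = ∑ i : Fin n, ∑ k : Fin (m i), (f i * βF i k) *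
            Ψ (lamF i k * (∑ j, a i j * x j) + θF i k) := by
          rw [← Finset.univ_sigma_univ, Finset.sum_sigma]
      _ = ∑ i : Fin n, f i * ∑ k : Fin (m i),
            βF i k * Ψ (lamF i k * (∑ j, a i j * x j) + θF i k) := by
          exact Finset.sum_congr rfl fun i _ => by
            rw [Finset.mul_sum]
            exact Finset.sum_congr rfl fun k _ => by ring
  -- evaluate the span combination at x
  have hpx : ∑ i : Fin n, f i * Real.exp (∑ j, a i j * x j) = (p : C(K,ℝ)) x' := by
    have := congrArg (fun q : C(K,ℝ) => q x') hv
    simp only [ContinuousMap.coe_sum, Finset.sum_apply, ContinuousMap.coe_smul,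
      Pi.smul_apply, smul_eq_mul] at this
    rw [← this]
    exact Finset.sum_congr rfl fun i _ => by rw [← ha i, hEapp]
  -- the error estimate
  rw [hnet]
  have hexp : ∀ i : Fin n,
      |Real.exp (∑ j, a i j * x j) - ∑ k : Fin (m i),
        βF i k * Ψ (lamF i k * (∑ j, a i j * x j) + θF i k)|
      ≤ ε / 2 / ((n+1) * (|f i| + 1)) := by
    intro i
    apply hF i
    rw [Set.mem_Icc]
    have := hMa i x hx
    rw [abs_le] at this
    exact this
  have key : |∑ i : Fin n, f i * Real.exp (∑ j, a i j * x j)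
      - ∑ i : Fin n, f i * ∑ k : Fin (m i),
          βF i k * Ψ (lamF i k * (∑ j, a i j * x j) + θF i k)| ≤ ε / 2 := by
    rw [← Finset.sum_sub_distrib]
    calc |∑ i : Fin n, (f i * Real.exp (∑ j, a i j * x j)
            - f i * ∑ k : Fin (m i), βF i k * Ψ (lamF i k * (∑ j, a i j * x j) + θF i k))|
        ≤ ∑ i : Fin n, |f i * Real.exp (∑ j, a i j * x j)
            - f i * ∑ k : Fin (m i), βF i k * Ψ (lamF i k * (∑ j, a i j * x j) + θF i k)| :=
          Finset.abs_sum_le_sum_abs _ _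
      _ ≤ ∑ _i : Fin n, ε / 2 / (n+1) := by
          apply Finset.sum_le_sum
          intro i _
          rw [← mul_sub, abs_mul]
          calc |f i| * |Real.exp (∑ j, a i j * x j) - ∑ k : Fin (m i),
                βF i k * Ψ (lamF i k * (∑ j, a i j * x j) + θF i k)|
              ≤ |f i| * (ε / 2 / ((n+1) * (|f i| + 1))) :=
                mul_le_mul_of_nonneg_left (hexp i) (abs_nonneg _)
            _ ≤ ε / 2 / (n+1) := by
                have h1 : (0:ℝ) < (n:ℝ) + 1 := by positivity
                have h2 : (0:ℝ) < |f i| + 1 := by positivity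
                rw [mul_div_assoc', div_le_div_iff₀ (by positivity) h1]
                nlinarith [abs_nonneg (f i), hε.le, h1.le]
      _ ≤ ε / 2 := by
          rw [Finset.sum_const, Finset.card_univ, Fintype.card_fin, nsmul_eq_mul]
          have h1 : (0:ℝ) < (n:ℝ) + 1 := by positivity
          rw [div_div, mul_div_assoc', div_le_div_iff₀ (by positivity) (by positivity : (0:ℝ) < 2)]
          nlinarith [hε.le]
  have hclose : |(p : C(K,ℝ)) x' - g x| < ε / 2 := by
    have := hp x'
    rwa [Real.norm_eq_abs] at this
  calc |g x - ∑ i : Fin n, f i * ∑ k : Fin (m i),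
        βF i k * Ψ (lamF i k * (∑ j, a i j * x j) + θF i k)|
      ≤ |g x - (p : C(K,ℝ)) x'| + |(p : C(K,ℝ)) x'
          - ∑ i : Fin n, f i * ∑ k : Fin (m i),
            βF i k * Ψ (lamF i k * (∑ j, a i j * x j) + θF i k)| := abs_sub_le _ _ _
    _ ≤ ε / 2 + ε / 2 := by
        have h1 : |g x - (p : C(K,ℝ)) x'| < ε/2 := by rw [abs_sub_comm]; exact hclose
        have h2 := key
        rw [hpx] at h2
        exact add_le_add h1.le h2
    _ = ε := by ring

/-- Single-hidden-layer feedforward networks with a squashing activation are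
`ρ_μ`-dense in the Borel measurable functions on `ℝ^r`, for any Borel
probability measure `μ`: the measure of the set where the error exceeds `ε`
can be made less than `ε`. -/
theorem universal_approximation_in_measure
    (Ψ : ℝ → ℝ) (hΨ : IsSquashing Ψ) (r : ℕ) (hr : 1 ≤ r)
    (μ : MeasureTheory.Measure (Fin r → ℝ)) [MeasureTheory.IsProbabilityMeasure μ]
    (f : (Fin r → ℝ) → ℝ) (hf : Measurable f)
    (ε : ℝ) (hε : 0 < ε) :
    ∃ (N : ℕ) (_ : 0 < N) (β : Fin N → ℝ) (w : Fin N → Fin r → ℝ) (θ : Fin N → ℝ),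
      μ {x | ε < |f x - ∑ i, β i * Ψ (∑ j, w i j * x j + θ i)|} < ENNReal.ofReal ε := by
  have hε3 : 0 < ε / 3 := by linarith
  have hε3top : ENNReal.ofReal (ε/3) ≠ 0 := by
    simp [ENNReal.ofReal_eq_zero]; linarith
  -- Step 1: truncation level
  have htrunc : ∃ M0 : ℕ, μ {x | (M0:ℝ) < |f x|} < ENNReal.ofReal (ε/3) := by
    set S : ℕ → Set (Fin r → ℝ) := fun m => {x | (m:ℝ) < |f x|} with hSdef
    have hmeas : ∀ m, MeasurableSet (S m) := fun m =>
      measurableSet_lt measurable_const hf.abs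
    have hanti : Antitone S := by
      intro m1 m2 h x hx
      simp only [hSdef, Set.mem_setOf_eq] at *
      have : (m1:ℝ) ≤ m2 := by exact_mod_cast h
      linarith
    have hempty : ⋂ m, S m = ∅ := by
      ext x
      simp only [Set.mem_iInter, Set.mem_empty_iff_false, iff_false, not_forall]
      obtain ⟨m, hm⟩ := exists_nat_ge |f x|
      exact ⟨m, by simp [hSdef]; exact hm⟩
    have htend : Tendsto (μ ∘ S) atTop (nhds (μ (⋂ m, S m))) :=
      tendsto_measure_iInter_atTop (fun m => (hmeas m).nullMeasurableSet) hanti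
        ⟨0, measure_ne_top μ _⟩
    rw [hempty, measure_empty] at htend
    have := htend.eventually_lt_const (by
      simp only [pos_iff_ne_zero]; exact hε3top)
    obtain ⟨m, hm⟩ := this.exists
    exact ⟨m, hm⟩
  obtain ⟨M0, hM0⟩ := htrunc
  -- Step 2: truncate
  set fM : (Fin r → ℝ) → ℝ := fun x => max (-(M0:ℝ)) (min (f x) M0) with hfMdef
  have hfMmeas : Measurable fM := measurable_const.max (hf.min measurable_const)
  have hfMbd : ∀ x, fM x ∈ Set.Icc (-(M0:ℝ)) M0 := by
    intro x
    constructor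
    · exact le_max_left _ _
    · apply max_le
      · have h0 : (0:ℝ) ≤ (M0:ℝ) := Nat.cast_nonneg M0
        linarith
      · exact min_le_right _ _
  have hfMLp : MemLp fM 1 μ :=
    memLp_of_bounded (Filter.Eventually.of_forall hfMbd)
      hfMmeas.aestronglyMeasurable 1
  -- Step 3: continuous compactly supported approximation in L¹
  have hε1 : ENNReal.ofReal ((ε/3) * (ε/3) / 2) ≠ 0 := by
    simp [ENNReal.ofReal_eq_zero]; positivity
  obtain ⟨g, hgsupp, hgL1, hgcont, hgLp⟩ :=
    hfMLp.exists_hasCompactSupport_eLpNorm_sub_le (by norm_num) hε1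
  -- Step 4: Markov
  have hmarkov : μ {x | ε/3 < |fM x - g x|} < ENNReal.ofReal (ε/3) := by
    set d : (Fin r → ℝ) → ℝ := fun x => fM x - g x with hddef
    have hdmeas : Measurable d := hfMmeas.sub hgcont.measurable
    have hsub : {x | ε/3 < |d x|} ⊆ {x | ENNReal.ofReal (ε/3) ≤ (‖d x‖₊ : ENNReal)} := by
      intro x hx
      simp only [Set.mem_setOf_eq] at *
      rw [← enorm_eq_nnnorm, ← ofReal_norm, Real.norm_eq_abs]
      exact ENNReal.ofReal_le_ofReal hx.le
    have hlint : ∫⁻ x, (‖d x‖₊ : ENNReal) ∂μ ≤ ENNReal.ofReal ((ε/3)*(ε/3)/2) := by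
      have := hgL1
      rwa [eLpNorm_one_eq_lintegral_enorm] at this
    calc μ {x | ε/3 < |d x|} ≤ μ {x | ENNReal.ofReal (ε/3) ≤ (‖d x‖₊ : ENNReal)} :=
          measure_mono hsub
      _ ≤ (∫⁻ x, (‖d x‖₊ : ENNReal) ∂μ) / ENNReal.ofReal (ε/3) :=
          meas_ge_le_lintegral_div (hdmeas.nnnorm.coe_nnreal_ennreal).aemeasurable
            hε3top ENNReal.ofReal_ne_top
      _ ≤ ENNReal.ofReal ((ε/3)*(ε/3)/2) / ENNReal.ofReal (ε/3) := by gcongr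
      _ < ENNReal.ofReal (ε/3) := by
          rw [ENNReal.div_lt_iff (Or.inl hε3top) (Or.inl ENNReal.ofReal_ne_top)]
          rw [← ENNReal.ofReal_mul hε3.le]
          rw [ENNReal.ofReal_lt_ofReal_iff (by positivity)]
          nlinarith
  -- Step 5: tightness
  have htight : ∃ m1 : ℕ, μ (Metric.closedBall (0 : Fin r → ℝ) m1)ᶜ < ENNReal.ofReal (ε/3) := by
    set S2 : ℕ → Set (Fin r → ℝ) := fun m => (Metric.closedBall (0 : Fin r → ℝ) m)ᶜ with hS2
    have hmeas2 : ∀ m, MeasurableSet (S2 m) :=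
      fun m => (Metric.isClosed_closedBall.measurableSet).compl
    have hanti2 : Antitone S2 := by
      intro m1 m2 h
      apply Set.compl_subset_compl.mpr
      apply Metric.closedBall_subset_closedBall
      exact_mod_cast h
    have hempty2 : ⋂ m, S2 m = ∅ := by
      ext x
      simp only [Set.mem_iInter, Set.mem_empty_iff_false, iff_false, not_forall]
      obtain ⟨m, hm⟩ := exists_nat_ge ‖x‖
      refine ⟨m, ?_⟩
      simp only [hS2, Set.mem_compl_iff, not_not, Metric.mem_closedBall, dist_zero_right]
      exact hm
    have htend2 : Tendsto (μ ∘ S2) atTop (nhds (μ (⋂ m, S2 m))) :=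
      tendsto_measure_iInter_atTop (fun m => (hmeas2 m).nullMeasurableSet) hanti2
        ⟨0, measure_ne_top μ _⟩
    rw [hempty2, measure_empty] at htend2
    have := htend2.eventually_lt_const (by simp only [pos_iff_ne_zero]; exact hε3top)
    obtain ⟨m, hm⟩ := this.exists
    exact ⟨m, hm⟩
  obtain ⟨m1, hm1⟩ := htight
  -- Step 6: network approximation on the ball
  obtain ⟨N, β, w, θ, hnet⟩ := net_on_compact hΨ (Metric.closedBall (0 : Fin r → ℝ) m1)
    (isCompact_closedBall _ _) g hgcont (ε/3) hε3
  -- Step 7: combine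
  set net : (Fin r → ℝ) → ℝ := fun x => ∑ i, β i * Ψ (∑ j, w i j * x j + θ i) with hnetdef
  have hincl : {x | ε < |f x - net x|} ⊆
      {x | (M0:ℝ) < |f x|} ∪ {x | ε/3 < |fM x - g x|}
        ∪ (Metric.closedBall (0 : Fin r → ℝ) m1)ᶜ := by
    intro x hx
    simp only [Set.mem_setOf_eq] at hx
    by_contra hcon
    simp only [Set.mem_union, Set.mem_setOf_eq, Set.mem_compl_iff, not_or, not_lt,
      not_not] at hcon
    obtain ⟨⟨h1, h2⟩, h3⟩ := hcon
    have hfM : fM x = f x := by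
      rw [hfMdef]
      rw [abs_le] at h1
      simp only
      rw [min_eq_left h1.2, max_eq_right h1.1]
    have h4 : |g x - net x| ≤ ε/3 := hnet x (not_not.mp (by simpa using h3))
    have : |f x - net x| ≤ ε := by
      have e1 : |f x - fM x| = 0 := by rw [hfM]; simp
      calc |f x - net x| ≤ |f x - fM x| + |fM x - net x| := abs_sub_le _ _ _
        _ ≤ |f x - fM x| + (|fM x - g x| + |g x - net x|) := by
            linarith [abs_sub_le (fM x) (g x) (net x)]
        _ ≤ 0 + (ε/3 + ε/3) := by rw [e1]; gcongr
        _ ≤ ε := by linarith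
    linarith
  -- measure bound, then pad to make N positive
  have hbound : μ {x | ε < |f x - net x|} < ENNReal.ofReal ε := by
    calc μ {x | ε < |f x - net x|}
        ≤ μ ({x | (M0:ℝ) < |f x|} ∪ {x | ε/3 < |fM x - g x|}
            ∪ (Metric.closedBall (0 : Fin r → ℝ) m1)ᶜ) := measure_mono hincl
      _ ≤ μ ({x | (M0:ℝ) < |f x|} ∪ {x | ε/3 < |fM x - g x|})
            + μ (Metric.closedBall (0 : Fin r → ℝ) m1)ᶜ := measure_union_le _ _
      _ ≤ μ {x | (M0:ℝ) < |f x|} + μ {x | ε/3 < |fM x - g x|}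
            + μ (Metric.closedBall (0 : Fin r → ℝ) m1)ᶜ := by
          gcongr
          exact measure_union_le _ _
      _ < ENNReal.ofReal (ε/3) + ENNReal.ofReal (ε/3) + ENNReal.ofReal (ε/3) := by
          apply ENNReal.add_lt_add
          apply ENNReal.add_lt_add hM0 hmarkov
          exact hm1
      _ = ENNReal.ofReal ε := by
          rw [← ENNReal.ofReal_add (by positivity) (by positivity),
            ← ENNReal.ofReal_add (by positivity) (by positivity)]
          congr 1
          ring
  refine ⟨N + 1, Nat.succ_pos N, (Fin.cons 0 β : Fin (N+1) → ℝ), (Fin.cons 0 w : Fin (N+1) → Fin r → ℝ), (Fin.cons 0 θ : Fin (N+1) → ℝ), ?_⟩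
  have hsum : ∀ x : Fin r → ℝ, ∑ i : Fin (N+1),
      (Fin.cons 0 β : Fin (N+1) → ℝ) i * Ψ (∑ j, (Fin.cons 0 w : Fin (N+1) → Fin r → ℝ) i j * x j
        + (Fin.cons 0 θ : Fin (N+1) → ℝ) i)
      = net x := by
    intro x
    rw [Fin.sum_univ_succ]
    simp only [Fin.cons_zero, Fin.cons_succ, zero_mul, zero_add, Pi.zero_apply,
      Finset.sum_const_zero, hnetdef]
  simp only [hsum]
  exact hbound
end

section
/- Let {x₁,…,x_n} be a set of n distinct points in ℝ^r and let g : ℝ^r → ℝ be an arbitrary function. If Ψ : ℝ → ℝ is a nondecreasing function taking values in [0,1] that achieves the values 0 and 1 (i.e., there exist a, b ∈ ℝ with Ψ(a) = 0 and Ψ(b) = 1), then there exists a single-hidden-layer network f with activation Ψ and exactly n hidden units, f(x) = ∑_{i=1}^n β_i Ψ(⟨w_i, x⟩ + θ_i), such that f(x_i) = g(x_i) for every i ∈ {1,…,n}. -/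
/-- Auxiliary: for finitely many distinct points of `ℝ^r` there is a linear
functional that separates them. -/
lemma network_interpolation_aux_sep {n r : ℕ} (x : Fin n → Fin r → ℝ)
    (hx : Function.Injective x) :
    ∃ v : Fin r → ℝ, Function.Injective (fun i => ∑ j, v j * x i j) := by
  classical
  let φ : Fin n × Fin n → ((Fin r → ℝ) →ₗ[ℝ] ℝ) :=
    fun p => ∑ j, (x p.1 j - x p.2 j) • LinearMap.proj j
  have hφ : ∀ p v, φ p v = ∑ j, (x p.1 j - x p.2 j) * v j := by
    intro p v
    simp [φ, LinearMap.sum_apply, LinearMap.smul_apply, smul_eq_mul]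
  have hker : ∀ p ∈ Finset.univ.offDiag (α := Fin n), LinearMap.ker (φ p) ≠ ⊤ := by
    intro p hp
    rw [Finset.mem_offDiag] at hp
    have hd : x p.1 - x p.2 ≠ 0 := sub_ne_zero.mpr (fun h => hp.2.2 (hx h))
    intro hT
    have : φ p (x p.1 - x p.2) = 0 := by
      have : (x p.1 - x p.2) ∈ LinearMap.ker (φ p) := hT ▸ Submodule.mem_top
      simpa using this
    rw [hφ] at this
    have : ∑ j, (x p.1 j - x p.2 j) ^ 2 = 0 := by
      rw [← this]; apply Finset.sum_congr rfl; intro j _; simp [Pi.sub_apply]; ring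
    have := (Finset.sum_eq_zero_iff_of_nonneg (fun j _ => sq_nonneg _)).mp this
    apply hd
    funext j
    have := this j (Finset.mem_univ j)
    simpa [pow_eq_zero_iff] using this
  set s : Finset (Subspace ℝ (Fin r → ℝ)) :=
    (Finset.univ.offDiag (α := Fin n)).image (fun p => LinearMap.ker (φ p)) with hs
  have htop : ⊤ ∉ s := by
    simp only [hs, Finset.mem_image]
    rintro ⟨p, hp, hpk⟩
    exact hker p hp hpk
  have hne := Subspace.biUnion_ne_univ_of_top_notMem htop
  have : ∃ v : Fin r → ℝ, v ∉ ⋃ p ∈ s, (p : Set (Fin r → ℝ)) := by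
    by_contra h
    push_neg at h
    exact hne (Set.eq_univ_of_forall h)
  obtain ⟨v, hv⟩ := this
  refine ⟨v, fun i i' h => ?_⟩
  by_contra hne'
  have hmem : LinearMap.ker (φ (i, i')) ∈ s := by
    apply Finset.mem_image_of_mem
    simp [Finset.mem_offDiag, hne']
  have : v ∈ LinearMap.ker (φ (i, i')) := by
    rw [LinearMap.mem_ker, hφ]
    simp only at h
    have : ∑ j, (x i j - x i' j) * v j = ∑ j, v j * x i j - ∑ j, v j * x i' j := by
      rw [← Finset.sum_sub_distrib]; apply Finset.sum_congr rfl; intros; ring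
    rw [this, h, sub_self]
  exact hv (Set.mem_biUnion hmem this)

/-- Auxiliary: any function on `Fin n` is realized as partial sums of a
suitable sequence. -/
lemma network_interpolation_aux_psum (n : ℕ) (G : Fin n → ℝ) :
    ∃ β : Fin n → ℝ, ∀ m : Fin n, ∑ k ∈ Finset.Iic m, β k = G m := by
  classical
  set G' : ℕ → ℝ := fun k => if h : k < n then G ⟨k, h⟩ else 0 with hG'
  set B : ℕ → ℝ := fun k => if k = 0 then G' 0 else G' k - G' (k - 1) with hB
  have key : ∀ m : ℕ, ∑ k ∈ Finset.range (m + 1), B k = G' m := by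
    intro m
    induction m with
    | zero => simp [hB]
    | succ m ih =>
      rw [Finset.sum_range_succ, ih]
      simp [hB]
  refine ⟨fun k => B k.val, fun m => ?_⟩
  have h1 : Finset.Iic m = Finset.univ.filter (· ≤ m) := by
    ext k; simp
  have h2 : ∑ k ∈ Finset.Iic m, B k.val
      = ∑ k : Fin n, if k ≤ m then B k.val else 0 := by
    rw [h1, Finset.sum_filter]
  rw [h2]
  simp only [Fin.le_def]
  rw [Fin.sum_univ_eq_sum_range (fun k => if k ≤ m.val then B k else 0)]
  have h3 : ∑ k ∈ Finset.range n, (if k ≤ m.val then B k else 0)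
      = ∑ k ∈ Finset.range (m.val + 1), (if k ≤ m.val then B k else 0) := by
    symm
    apply Finset.sum_subset
    · exact Finset.range_subset_range.mpr m.isLt
    · intro k _ hk
      rw [Finset.mem_range, Nat.lt_succ_iff] at hk
      simp [hk]
  rw [h3]
  have h4 : ∑ k ∈ Finset.range (m.val + 1), (if k ≤ m.val then B k else 0)
      = ∑ k ∈ Finset.range (m.val + 1), B k := by
    apply Finset.sum_congr rfl
    intro k hk
    rw [Finset.mem_range, Nat.lt_succ_iff] at hk
    simp [hk]
  rw [h4, key, hG']
  simp [m.isLt]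

/-- A single-hidden-layer network with `n` hidden units and a nondecreasing
`[0,1]`-valued activation attaining both `0` and `1` can interpolate arbitrary
data at `n` distinct points of `ℝ^r`. -/
theorem network_interpolation
    (n r : ℕ) (x : Fin n → Fin r → ℝ) (hx : Function.Injective x)
    (g : (Fin r → ℝ) → ℝ)
    (Ψ : ℝ → ℝ) (hmono : Monotone Ψ) (hrange : ∀ t, Ψ t ∈ Set.Icc (0 : ℝ) 1)
    (h0 : ∃ a, Ψ a = 0) (h1 : ∃ b, Ψ b = 1) :
    ∃ (β : Fin n → ℝ) (w : Fin n → Fin r → ℝ) (θ : Fin n → ℝ),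
      ∀ i, ∑ k, β k * Ψ (∑ j, w k j * x i j + θ k) = g (x i) := by
  classical
  obtain ⟨a, ha⟩ := h0
  obtain ⟨b, hb⟩ := h1
  have hab : a < b := by
    by_contra hc
    push_neg at hc
    have := hmono hc
    rw [ha, hb] at this
    linarith
  obtain ⟨v, hv⟩ := network_interpolation_aux_sep x hx
  set t : Fin n → ℝ := fun i => ∑ j, v j * x i j with ht
  set σ : Equiv.Perm (Fin n) := Tuple.sort t with hσ
  set s : Fin n → ℝ := t ∘ σ with hsdef
  have hsm : StrictMono s := by
    apply (Tuple.monotone_sort t).strictMono_of_injective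
    exact hv.comp σ.injective
  have hpred : ∀ k : Fin n, k.val - 1 < n := fun k =>
    Nat.lt_of_le_of_lt (Nat.sub_le _ _) k.isLt
  set lam : Fin n → ℝ := fun k =>
    if k.val = 0 then 0 else (b - a) / (s k - s ⟨k.val - 1, hpred k⟩) with hlam
  have hprev_lt : ∀ k : Fin n, k.val ≠ 0 → s ⟨k.val - 1, hpred k⟩ < s k := by
    intro k hk
    apply hsm
    rw [Fin.lt_def]
    exact Nat.sub_lt (Nat.pos_of_ne_zero hk) one_pos
  have hlam_nonneg : ∀ k, 0 ≤ lam k := by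
    intro k
    rw [hlam]
    simp only
    split
    · exact le_refl _
    · next hk =>
        exact le_of_lt (div_pos (by linarith) (by linarith [hprev_lt k hk]))
  set w : Fin n → Fin r → ℝ := fun k j => lam k * v j with hw
  set θ : Fin n → ℝ := fun k => b - lam k * s k with hθ
  have inner_eq : ∀ k i, ∑ j, w k j * x i j + θ k = lam k * (t i - s k) + b := by
    intro k i
    have : ∑ j, w k j * x i j = lam k * t i := by
      rw [ht, Finset.mul_sum]
      apply Finset.sum_congr rfl
      intros; rw [hw]; ring
    rw [this, hθ]; ring
  have key : ∀ k i, Ψ (lam k * (t i - s k) + b) = if s k ≤ t i then 1 else 0 := by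
    intro k i
    by_cases hle : s k ≤ t i
    · have h1' : b ≤ lam k * (t i - s k) + b := by
        nlinarith [hlam_nonneg k]
      have h2' := hmono h1'
      rw [hb] at h2'
      have h3' := (hrange (lam k * (t i - s k) + b)).2
      rw [if_pos hle]; linarith
    · push_neg at hle
      set m := σ.symm i with hm
      have htm : t i = s m := by
        rw [hsdef]; simp [hm]
      have hmk : m < k := by
        rw [← hsm.lt_iff_lt, ← htm]; exact hle
      have hk0 : k.val ≠ 0 := by
        intro h
        have := Fin.lt_def.mp hmk
        omega
      set k' : Fin n := ⟨k.val - 1, hpred k⟩ with hk'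
      have hmle : m ≤ k' := by
        rw [Fin.le_def]
        have := Fin.lt_def.mp hmk
        simp [hk']
        omega
      have hts : t i ≤ s k' := htm ▸ hsm.monotone hmle
      have hkk' : s k' < s k := hprev_lt k hk0
      have hlamk : lam k = (b - a) / (s k - s k') := by rw [hlam]; simp [hk0, hk']
      have h6 : lam k * (s k' - s k) = -(b - a) := by
        rw [hlamk]
        have hne : s k - s k' ≠ 0 := by linarith
        field_simp
        ring
      have harg : lam k * (t i - s k) + b ≤ a := by
        have h5 : lam k * (t i - s k) ≤ lam k * (s k' - s k) :=
          mul_le_mul_of_nonneg_left (by linarith) (hlam_nonneg k)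
        linarith
      have h2' := hmono harg
      rw [ha] at h2'
      have h3' := (hrange (lam k * (t i - s k) + b)).1
      rw [if_neg (not_le.mpr hle)]; linarith
  obtain ⟨β, hβ⟩ := network_interpolation_aux_psum n (fun m => g (x (σ m)))
  refine ⟨β, w, θ, fun i => ?_⟩
  set m := σ.symm i with hm
  have step1 : ∑ k, β k * Ψ (∑ j, w k j * x i j + θ k)
      = ∑ k : Fin n, if k ≤ m then β k else 0 := by
    apply Finset.sum_congr rfl
    intro k _
    rw [inner_eq, key]
    have htm : t i = s m := by rw [hsdef]; simp [hm]
    have hiff : s k ≤ t i ↔ k ≤ m := by rw [htm, hsm.le_iff_le]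
    by_cases hk : k ≤ m
    · rw [if_pos (hiff.mpr hk), if_pos hk]; ring
    · rw [if_neg (fun h => hk (hiff.mp h)), if_neg hk]; ring
  have step2 : ∑ k : Fin n, (if k ≤ m then β k else 0) = ∑ k ∈ Finset.Iic m, β k := by
    have h1 : Finset.Iic m = Finset.univ.filter (· ≤ m) := by ext k; simp
    rw [h1, Finset.sum_filter]
  rw [step1, step2, hβ m]
  congr 1
  rw [hm]
  simp
end

section
/- Let σ : ℝ → ℝ be a bounded measurable sigmoidal function, i.e., σ is bounded, Borel measurable, and satisfies σ(t) → 1 as t → ∞ and σ(t) → 0 as t → −∞ (continuity is not required). Then for every r ≥ 1, every compact set K ⊆ ℝ^r, every continuous function f : K → ℝ, and every ε > 0, there exist N ∈ ℕ, coefficients c₁,…,c_N ∈ ℝ, vectors w₁,…,w_N ∈ ℝ^r, and θ₁,…,θ_N ∈ ℝ such that sup_{x ∈ K} |f(x) − ∑_{i=1}^N c_i σ(⟨w_i, x⟩ + θ_i)| < ε. In other words, boundedness of the sigmoidal activation is a sufficient condition for the universal approximation theorem of Cybenko to hold, with a constructive proof. -/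
open Filter

/-- A sigmoidal function: `σ(t) → 1` as `t → ∞` and `σ(t) → 0` as `t → -∞`
(no continuity required). -/
def IsSigmoidal (σ : ℝ → ℝ) : Prop :=
  Tendsto σ atTop (nhds 1) ∧ Tendsto σ atBot (nhds 0)

set_option maxHeartbeats 1000000 in
lemma sigmoid_onedim (σ : ℝ → ℝ) (M : ℝ) (hM : ∀ t, |σ t| ≤ M)
    (hσ : IsSigmoidal σ) (h : ℝ → ℝ) (hh : Continuous h)
    (R ε : ℝ) (hR : 1 ≤ R) (hε : 0 < ε) :
    ∃ (n : ℕ) (c a b : Fin n → ℝ),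
      ∀ t ∈ Set.Icc (-R) R, |h t - ∑ i, c i * σ (a i * t + b i)| < ε := by
  have hM0 : 0 ≤ M := le_trans (abs_nonneg _) (hM 0)
  set ε₁ := ε / (5 * (M + 2)) with hε₁def
  have hε₁ : 0 < ε₁ := by positivity
  have hR0 : 0 < R := lt_of_lt_of_le one_pos hR
  -- uniform continuity
  have huc := (isCompact_Icc (a := -R) (b := R)).uniformContinuousOn_of_continuous
      hh.continuousOn
  rw [Metric.uniformContinuousOn_iff] at huc
  obtain ⟨δ, hδ, hδ'⟩ := huc ε₁ hε₁
  obtain ⟨n, hn⟩ := exists_nat_gt (2 * R / δ)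
  have hn0R : (0:ℝ) < n := lt_trans (by positivity) hn
  have hn0 : 0 < n := by exact_mod_cast hn0R
  set mesh := 2 * R / n with hmeshdef
  have hmesh : 0 < mesh := by positivity
  have hmeshδ : mesh < δ := by
    rw [hmeshdef, div_lt_iff₀ hn0R]
    have h1 : (2 * R / δ) * δ < n * δ := mul_lt_mul_of_pos_right hn hδ
    have h2 : (2 * R / δ) * δ = 2 * R := by field_simp
    linarith
  set t0 : ℕ → ℝ := fun k => -R + k * mesh with ht0def
  set u : ℕ → ℝ := fun k => -R + ((k : ℝ) + 1/2) * mesh with hudef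
  set d : ℕ → ℝ := fun k => h (t0 (k+1)) - h (t0 k) with hddef
  have htn : t0 n = R := by
    rw [ht0def]; simp only; rw [hmeshdef]; field_simp; ring
  have htk_mem : ∀ k, k ≤ n → t0 k ∈ Set.Icc (-R) R := by
    intro k hk
    have hkR : (k:ℝ) ≤ n := by exact_mod_cast hk
    constructor
    · simp only [ht0def]; nlinarith [mul_nonneg (Nat.cast_nonneg (α := ℝ) k) hmesh.le]
    · simp only [ht0def]
      have : (k:ℝ) * mesh ≤ n * mesh := mul_le_mul_of_nonneg_right hkR hmesh.le
      have h2 : (n:ℝ) * mesh = 2 * R := by rw [hmeshdef]; field_simp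
      linarith
  have hd : ∀ k, k < n → |d k| ≤ ε₁ := by
    intro k hk
    have := hδ' (t0 (k+1)) (htk_mem _ hk) (t0 k) (htk_mem _ hk.le)
      (by
        rw [Real.dist_eq]
        have : t0 (k+1) - t0 k = mesh := by
          simp only [ht0def]; push_cast; ring
        rw [this, abs_of_pos hmesh]; exact hmeshδ)
    rw [Real.dist_eq] at this
    exact this.le
  set S := (n : ℝ) * ε₁ + |h (t0 0)| with hSdef
  have hS0 : 0 ≤ S := by positivity
  set ε' := ε / (5 * (S + 1)) with hε'def
  have hε' : 0 < ε' := by positivity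
  -- tail bounds for σ
  obtain ⟨T₁, hT₁⟩ := eventually_atTop.mp ((Metric.tendsto_nhds.mp hσ.1) ε' hε')
  obtain ⟨T₂, hT₂⟩ := eventually_atBot.mp ((Metric.tendsto_nhds.mp hσ.2) ε' hε')
  set T := max T₁ (max (-T₂) 1) with hTdef
  have hT1 : ∀ s, T ≤ s → |σ s - 1| ≤ ε' := by
    intro s hs
    have := hT₁ s (le_trans (le_max_left _ _) hs)
    rw [Real.dist_eq] at this; exact this.le
  have hT0 : ∀ s, s ≤ -T → |σ s| ≤ ε' := by
    intro s hs
    have hT2' : -T ≤ T₂ := by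
      have : -T₂ ≤ T := le_trans (le_max_left _ _) (le_max_right _ _)
      linarith
    have := hT₂ s (hs.trans hT2')
    rw [Real.dist_eq, sub_zero] at this; exact this.le
  have hTpos : (1:ℝ) ≤ T := le_trans (le_max_right _ _) (le_max_right _ _)
  set lam := 2 * T / mesh with hlamdef
  have hlam : 0 < lam := by positivity
  have hlamT : lam * (mesh / 2) = T := by rw [hlamdef]; field_simp
  clear_value ε₁ mesh t0 u d S ε' T lam
  -- the network
  refine ⟨n + 1, Fin.cons (h (t0 0)) (fun k : Fin n => d k),
    Fin.cons 0 (fun _ => lam), Fin.cons T (fun k : Fin n => -(lam * u k)), ?_⟩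
  intro t ht
  rw [Fin.sum_univ_succ]
  simp only [Fin.cons_zero, Fin.cons_succ]
  rw [Fin.sum_univ_eq_sum_range (fun k => d k * σ (lam * t + -(lam * u k))) n]
  -- the step index j
  set A := (Finset.range n).filter (fun k => u k < t) with hAdef
  set j := A.card with hjdef
  have hjn : j ≤ n := by
    rw [hjdef]
    calc A.card ≤ (Finset.range n).card := Finset.card_filter_le _ _
    _ = n := Finset.card_range n
  have humono : ∀ k l : ℕ, k ≤ l → u k ≤ u l := by
    intro k l hkl
    simp only [hudef]
    have : (k:ℝ) ≤ l := by exact_mod_cast hkl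
    nlinarith
  have hiff : ∀ k, k < n → (u k < t ↔ k < j) := by
    intro k hk
    constructor
    · intro hu
      have hsub : Finset.range (k+1) ⊆ A := by
        intro k' hk'
        rw [Finset.mem_range, Nat.lt_succ_iff] at hk'
        rw [hAdef, Finset.mem_filter, Finset.mem_range]
        exact ⟨lt_of_le_of_lt hk' hk, lt_of_le_of_lt (humono _ _ hk') hu⟩
      have := Finset.card_le_card hsub
      rw [Finset.card_range] at this
      omega
    · intro hkj
      by_contra hu
      have hsub : A ⊆ Finset.range k := by
        intro k' hk'
        rw [hAdef, Finset.mem_filter] at hk'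
        rw [Finset.mem_range]
        by_contra hkk'
        push_neg at hkk'
        exact hu (lt_of_le_of_lt (humono _ _ hkk') hk'.2)
      have := Finset.card_le_card hsub
      rw [Finset.card_range] at this
      omega
  -- telescoping
  have htel : h (t0 0) + ∑ k ∈ Finset.range n, d k * (if u k < t then 1 else 0)
      = h (t0 j) := by
    have hcong : ∀ k ∈ Finset.range n,
        d k * (if u k < t then 1 else 0) = if k < j then d k else 0 := by
      intro k hk
      rw [Finset.mem_range] at hk
      by_cases hu : u k < t
      · rw [if_pos hu, if_pos ((hiff k hk).mp hu), mul_one]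
      · rw [if_neg hu, if_neg (fun hj => hu ((hiff k hk).mpr hj)), mul_zero]
    rw [Finset.sum_congr rfl hcong]
    have h1 : ∑ k ∈ Finset.range j, (if k < j then d k else 0)
        = ∑ k ∈ Finset.range n, (if k < j then d k else 0) :=
      Finset.sum_subset (Finset.range_subset_range.mpr hjn)
        (fun k _ hk' => by rw [Finset.mem_range] at hk'; exact if_neg (by omega))
    have h2 : ∑ k ∈ Finset.range j, (if k < j then d k else 0)
        = ∑ k ∈ Finset.range j, d k :=
      Finset.sum_congr rfl (fun k hk => by
        rw [Finset.mem_range] at hk; exact if_pos hk)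
    have hts : ∑ k ∈ Finset.range j, d k = h (t0 j) - h (t0 0) := by
      simp only [hddef]
      exact Finset.sum_range_sub (fun k => h (t0 k)) j
    rw [← h1, h2, hts]; ring
  -- closeness of t to t0 j
  have hjt : |t - t0 j| < δ := by
    have hub : t ≤ t0 j + mesh / 2 := by
      rcases eq_or_lt_of_le hjn with hje | hjlt
      · rw [hje, htn]; have := ht.2; linarith
      · have := (hiff j hjlt).not.mpr (lt_irrefl j)
        push_neg at this
        simp only [hudef, ht0def] at this ⊢
        nlinarith
    have hlb : t0 j - mesh / 2 ≤ t := by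
      rcases Nat.eq_zero_or_pos j with hj0 | hjpos
      · rw [hj0]; simp only [ht0def]; push_cast; have := ht.1; linarith
      · have hj1 : j - 1 < n := by omega
        have := (hiff (j-1) hj1).mpr (by omega)
        have hcast : ((j - 1 : ℕ) : ℝ) = (j : ℝ) - 1 := by
          rw [Nat.cast_sub hjpos]; norm_num
        simp only [hudef, ht0def, hcast] at this ⊢
        nlinarith
    rw [abs_sub_lt_iff]
    constructor <;> linarith
  have hhj : |h t - h (t0 j)| < ε₁ := by
    have := hδ' t ht (t0 j) (htk_mem j hjn) (by rw [Real.dist_eq]; exact hjt)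
    rw [Real.dist_eq] at this; exact this
  -- per-term bounds
  have hgoodbound : ∀ k, k < n → mesh / 2 ≤ |t - u k| →
      |d k * ((if u k < t then 1 else 0) - σ (lam * t + -(lam * u k)))| ≤ ε₁ * ε' := by
    intro k hk hgood
    have harg : lam * t + -(lam * u k) = lam * (t - u k) := by ring
    rcases le_abs.mp hgood with hpos | hneg
    · have hχ : u k < t := by linarith
      rw [if_pos hχ, harg, abs_mul]
      have hT' : T ≤ lam * (t - u k) := by
        rw [← hlamT]; exact mul_le_mul_of_nonneg_left hpos hlam.le
      have := hT1 _ hT'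
      have habs : |1 - σ (lam * (t - u k))| ≤ ε' := by rw [abs_sub_comm]; exact this
      exact mul_le_mul (hd k hk) habs (abs_nonneg _) hε₁.le
    · have hχ : ¬ u k < t := by push_neg; linarith
      rw [if_neg hχ, harg, abs_mul]
      have hT' : lam * (t - u k) ≤ -T := by
        rw [← hlamT]; nlinarith
      have := hT0 _ hT'
      have habs : |0 - σ (lam * (t - u k))| ≤ ε' := by rw [zero_sub, abs_neg]; exact this
      exact mul_le_mul (hd k hk) habs (abs_nonneg _) hε₁.le
  have hterm : ∃ k₀ : ℕ, ∀ k ∈ Finset.range n,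
      |d k * ((if u k < t then 1 else 0) - σ (lam * t + -(lam * u k)))|
        ≤ if k = k₀ then ε/5 else ε₁ * ε' := by
    have hcrude : ∀ k, k < n →
        |d k * ((if u k < t then 1 else 0) - σ (lam * t + -(lam * u k)))| ≤ ε/5 := by
      intro k hk
      rw [abs_mul]
      have h1 : |(if u k < t then (1:ℝ) else 0) - σ (lam * t + -(lam * u k))| ≤ M + 1 := by
        have := hM (lam * t + -(lam * u k))
        have h2 : |(if u k < t then (1:ℝ) else 0)| ≤ 1 := by split_ifs <;> simp
        calc |(if u k < t then (1:ℝ) else 0) - σ (lam * t + -(lam * u k))|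
            ≤ |(if u k < t then (1:ℝ) else 0)| + |σ (lam * t + -(lam * u k))| :=
              abs_sub _ _
        _ ≤ M + 1 := by linarith
      calc |d k| * |(if u k < t then (1:ℝ) else 0) - σ (lam * t + -(lam * u k))|
          ≤ ε₁ * (M + 1) := mul_le_mul (hd k hk) h1 (abs_nonneg _) hε₁.le
      _ ≤ ε/5 := by
          rw [hε₁def]
          rw [div_mul_eq_mul_div, div_le_div_iff₀ (by positivity) (by norm_num)]
          nlinarith
    by_cases hbad : ∃ k₀ ∈ Finset.range n, |t - u k₀| < mesh / 2
    · obtain ⟨k₀, hk₀r, hk₀⟩ := hbad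
      refine ⟨k₀, fun k hk => ?_⟩
      rw [Finset.mem_range] at hk
      by_cases hkk : k = k₀
      · rw [if_pos hkk]; exact hcrude k hk
      · rw [if_neg hkk]
        apply hgoodbound k hk
        by_contra hc
        push_neg at hc
        rw [Finset.mem_range] at hk₀r
        have hdiff : u k - u k₀ = ((k:ℝ) - (k₀:ℝ)) * mesh := by
          simp only [hudef]; ring
        have h1 : |u k - u k₀| < mesh := by
          calc |u k - u k₀| ≤ |u k - t| + |t - u k₀| := abs_sub_le _ _ _
          _ = |t - u k| + |t - u k₀| := by rw [abs_sub_comm]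
          _ < mesh / 2 + mesh / 2 := by exact add_lt_add hc hk₀
          _ = mesh := by ring
        have h2 : mesh ≤ |u k - u k₀| := by
          rw [hdiff, abs_mul, abs_of_pos hmesh]
          have : (1:ℝ) ≤ |(k:ℝ) - (k₀:ℝ)| := by
            rcases Nat.lt_or_ge k k₀ with hlt | hge
            · have h3 : (k:ℝ) + 1 ≤ k₀ := by exact_mod_cast hlt
              rw [abs_sub_comm, abs_of_pos (by linarith)]
              linarith
            · have hlt : k₀ < k := lt_of_le_of_ne hge (Ne.symm hkk)
              have h3 : (k₀:ℝ) + 1 ≤ k := by exact_mod_cast hlt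
              rw [abs_of_pos (by linarith)]
              linarith
          nlinarith
        linarith
    · push_neg at hbad
      refine ⟨n, fun k hk => ?_⟩
      rw [Finset.mem_range] at hk
      rw [if_neg (Nat.ne_of_lt hk)]
      exact hgoodbound k hk (hbad k (Finset.mem_range.mpr hk))
  have hsum : |∑ k ∈ Finset.range n,
      d k * ((if u k < t then 1 else 0) - σ (lam * t + -(lam * u k)))|
        ≤ ε/5 + n * (ε₁ * ε') := by
    obtain ⟨k₀, hk₀⟩ := hterm
    calc |∑ k ∈ Finset.range n,
        d k * ((if u k < t then 1 else 0) - σ (lam * t + -(lam * u k)))|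
        ≤ ∑ k ∈ Finset.range n,
          |d k * ((if u k < t then 1 else 0) - σ (lam * t + -(lam * u k)))| :=
          Finset.abs_sum_le_sum_abs _ _
    _ ≤ ∑ k ∈ Finset.range n, (if k = k₀ then ε/5 else ε₁ * ε') :=
        Finset.sum_le_sum hk₀
    _ ≤ ∑ k ∈ Finset.range n, ((if k = k₀ then ε/5 else 0) + ε₁ * ε') := by
        apply Finset.sum_le_sum
        intro k _
        split_ifs <;> [skip; skip] <;> nlinarith [mul_nonneg hε₁.le hε'.le, hε]
    _ = (if k₀ ∈ Finset.range n then ε/5 else 0) + n * (ε₁ * ε') := by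
        rw [Finset.sum_add_distrib, Finset.sum_ite_eq' (Finset.range n) k₀ (fun _ => ε/5),
          Finset.sum_const, Finset.card_range, nsmul_eq_mul]
    _ ≤ ε/5 + n * (ε₁ * ε') := by
        have h5 : (0:ℝ) ≤ ε/5 := by positivity
        split_ifs
        · exact le_rfl
        · have h6 : (0:ℝ) ≤ (n:ℝ) * (ε₁ * ε') := by positivity
          linarith
  -- final assembly
  have hσT : |1 - σ (0 * t + T)| ≤ ε' := by
    rw [zero_mul, zero_add, abs_sub_comm]; exact hT1 T le_rfl
  have hsplit : ∑ k ∈ Finset.range n,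
      d k * ((if u k < t then 1 else 0) - σ (lam * t + -(lam * u k)))
      = (∑ k ∈ Finset.range n, d k * (if u k < t then 1 else 0))
        - ∑ k ∈ Finset.range n, d k * σ (lam * t + -(lam * u k)) := by
    rw [← Finset.sum_sub_distrib]
    exact Finset.sum_congr rfl (fun k _ => by ring)
  have hkey : h t - (h (t0 0) * σ (0 * t + T)
      + ∑ k ∈ Finset.range n, d k * σ (lam * t + -(lam * u k)))
      = (h t - h (t0 j)) + h (t0 0) * (1 - σ (0 * t + T))
        + ∑ k ∈ Finset.range n,
          d k * ((if u k < t then 1 else 0) - σ (lam * t + -(lam * u k))) := by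
    rw [hsplit, ← htel]; ring
  rw [hkey]
  have habs : |(h t - h (t0 j)) + h (t0 0) * (1 - σ (0 * t + T))
      + ∑ k ∈ Finset.range n,
        d k * ((if u k < t then 1 else 0) - σ (lam * t + -(lam * u k)))|
      ≤ |h t - h (t0 j)| + |h (t0 0)| * |1 - σ (0 * t + T)|
        + |∑ k ∈ Finset.range n,
          d k * ((if u k < t then 1 else 0) - σ (lam * t + -(lam * u k)))| := by
    calc _ ≤ |(h t - h (t0 j)) + h (t0 0) * (1 - σ (0 * t + T))|
        + |∑ k ∈ Finset.range n,
          d k * ((if u k < t then 1 else 0) - σ (lam * t + -(lam * u k)))| :=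
        abs_add_le _ _
    _ ≤ _ := by
        have := abs_add_le (h t - h (t0 j)) (h (t0 0) * (1 - σ (0 * t + T)))
        rw [abs_mul] at this
        linarith
  have hY : |h (t0 0)| * |1 - σ (0 * t + T)| ≤ |h (t0 0)| * ε' :=
    mul_le_mul_of_nonneg_left hσT (abs_nonneg _)
  have hA : ε₁ ≤ ε / 5 := by
    rw [hε₁def, div_le_div_iff₀ (by positivity) (by norm_num)]
    nlinarith
  have hB : |h (t0 0)| * ε' + ↑n * (ε₁ * ε') = S * ε' := by rw [hSdef]; ring
  have hC : S * ε' < ε / 5 := by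
    have h1 : S * ε' = S * ε / (5 * (S + 1)) := by rw [hε'def]; ring
    rw [h1, div_lt_div_iff₀ (by positivity) (by norm_num)]
    nlinarith
  calc |(h t - h (t0 j)) + h (t0 0) * (1 - σ (0 * t + T))
      + ∑ k ∈ Finset.range n,
        d k * ((if u k < t then 1 else 0) - σ (lam * t + -(lam * u k)))|
      ≤ |h t - h (t0 j)| + |h (t0 0)| * |1 - σ (0 * t + T)|
        + |∑ k ∈ Finset.range n,
          d k * ((if u k < t then 1 else 0) - σ (lam * t + -(lam * u k)))| := habs
  _ < ε₁ + |h (t0 0)| * ε' + (ε/5 + ↑n * (ε₁ * ε')) := by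
      have := add_lt_add_of_lt_of_le hhj (add_le_add hY hsum)
      linarith
  _ < ε := by linarith

open Finset in
set_option maxHeartbeats 1000000 in
lemma ridge_cos_dense {r : ℕ} (K : Set (Fin r → ℝ)) (hK : IsCompact K)
    (f : (Fin r → ℝ) → ℝ) (hf : ContinuousOn f K) (ε : ℝ) (hε : 0 < ε) :
    ∃ (m : ℕ) (a : Fin m → ℝ) (w : Fin m → Fin r → ℝ) (θ : Fin m → ℝ),
      ∀ x ∈ K, |f x - ∑ i, a i * Real.cos (∑ j, w i j * x j + θ i)| < ε := by
  haveI : CompactSpace ↥K := isCompact_iff_compactSpace.mp hK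
  have hlin : ∀ w : Fin r → ℝ,
      Continuous (fun x : ↥K => ∑ j, w j * (x : Fin r → ℝ) j) := fun w =>
    continuous_finset_sum _ (fun j _ =>
      continuous_const.mul ((continuous_apply j).comp continuous_subtype_val))
  let Rdg : (Fin r → ℝ) → ℝ → C(↥K, ℝ) := fun w θ =>
    ⟨fun x => Real.cos (∑ j, w j * (x : Fin r → ℝ) j + θ),
      Real.continuous_cos.comp ((hlin w).add continuous_const)⟩
  set S : Set C(↥K, ℝ) := {g | ∃ w θ, Rdg w θ = g} with hSdef
  set p : Submodule ℝ C(↥K, ℝ) := Submodule.span ℝ S with hpdef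
  have h_one : (1 : C(↥K, ℝ)) ∈ p := by
    apply Submodule.subset_span
    refine ⟨0, 0, ?_⟩
    ext x
    simp [Rdg]
  have hcoskey : ∀ A B : ℝ, Real.cos A * Real.cos B
      = 1/2 * Real.cos (A + B) + 1/2 * Real.cos (A - B) := by
    intro A B
    rw [Real.cos_add, Real.cos_sub]; ring
  have hSS : ∀ g₁ ∈ S, ∀ g₂ ∈ S, g₁ * g₂ ∈ p := by
    rintro _ ⟨w₁, θ₁, rfl⟩ _ ⟨w₂, θ₂, rfl⟩
    have hprod : Rdg w₁ θ₁ * Rdg w₂ θ₂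
        = (1/2 : ℝ) • Rdg (w₁ + w₂) (θ₁ + θ₂) + (1/2 : ℝ) • Rdg (w₁ - w₂) (θ₁ - θ₂) := by
      ext x
      simp only [Rdg, ContinuousMap.mul_apply, ContinuousMap.add_apply,
        ContinuousMap.smul_apply, ContinuousMap.coe_mk, smul_eq_mul]
      have hC : (∑ j, (w₁ + w₂) j * (x : Fin r → ℝ) j) + (θ₁ + θ₂)
          = (∑ j, w₁ j * (x : Fin r → ℝ) j + θ₁)
            + (∑ j, w₂ j * (x : Fin r → ℝ) j + θ₂) := by
        simp only [Pi.add_apply, add_mul, Finset.sum_add_distrib]; ring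
      have hD : (∑ j, (w₁ - w₂) j * (x : Fin r → ℝ) j) + (θ₁ - θ₂)
          = (∑ j, w₁ j * (x : Fin r → ℝ) j + θ₁)
            - (∑ j, w₂ j * (x : Fin r → ℝ) j + θ₂) := by
        simp only [Pi.sub_apply, sub_mul, Finset.sum_sub_distrib]; ring
      rw [hC, hD, hcoskey]
    rw [hprod]
    exact Submodule.add_mem _
      (Submodule.smul_mem _ _ (Submodule.subset_span ⟨_, _, rfl⟩))
      (Submodule.smul_mem _ _ (Submodule.subset_span ⟨_, _, rfl⟩))
  have h_mul : ∀ x y : C(↥K, ℝ), x ∈ p → y ∈ p → x * y ∈ p := by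
    have hmulle : p * p ≤ p := by
      rw [hpdef, Submodule.span_mul_span]
      refine Submodule.span_le.mpr ?_
      rintro _ ⟨g₁, hg₁, g₂, hg₂, rfl⟩
      exact hSS g₁ hg₁ g₂ hg₂
    exact fun x y hx hy => hmulle (Submodule.mul_mem_mul hx hy)
  set A : Subalgebra ℝ C(↥K, ℝ) := p.toSubalgebra h_one h_mul with hAdef
  have hsep : A.SeparatesPoints := by
    intro x y hxy
    have hxy' : (x : Fin r → ℝ) ≠ y := fun h => hxy (Subtype.ext h)
    obtain ⟨j, hj⟩ := Function.ne_iff.mp hxy'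
    set c := (Real.pi / 2) / (|(x : Fin r → ℝ) j| + |(y : Fin r → ℝ) j| + 1) with hcdef
    have hπ : (0:ℝ) < Real.pi / 2 := by positivity
    have hc : 0 < c := by positivity
    set w : Fin r → ℝ := fun i => if i = j then c else 0 with hwdef
    have hsum : ∀ z : ↥K, (∑ i, w i * (z : Fin r → ℝ) i) = c * (z : Fin r → ℝ) j := by
      intro z
      rw [Finset.sum_eq_single j
        (fun i _ hij => by simp [hwdef, if_neg hij])
        (fun hj' => absurd (Finset.mem_univ j) hj')]
      simp [hwdef]
    have hval : ∀ z : ↥K, Rdg w (-(Real.pi/2)) z = Real.sin (c * (z : Fin r → ℝ) j) := by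
      intro z
      show Real.cos _ = _
      rw [hsum z, ← sub_eq_add_neg, Real.cos_sub_pi_div_two]
    have hmem' : ∀ z : ℝ, |z| ≤ Real.pi/2 / (|z| + 1)⁻¹⁻¹ → True := fun _ _ => trivial
    have hbound : ∀ z : ℝ, |z| ≤ |(x : Fin r → ℝ) j| + |(y : Fin r → ℝ) j| →
        c * z ∈ Set.Icc (-(Real.pi/2)) (Real.pi/2) := by
      intro z hz
      have h1 : |c * z| ≤ Real.pi / 2 := by
        rw [abs_mul, abs_of_pos hc, hcdef]
        rw [div_mul_eq_mul_div, div_le_iff₀ (by positivity)]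
        nlinarith [abs_nonneg z, abs_nonneg ((x : Fin r → ℝ) j), abs_nonneg ((y : Fin r → ℝ) j)]
      exact abs_le.mp h1
    have hne : Real.sin (c * (x : Fin r → ℝ) j) ≠ Real.sin (c * (y : Fin r → ℝ) j) := by
      intro heq
      have hinj := Real.strictMonoOn_sin.injOn
        (hbound _ (by nlinarith [abs_nonneg ((y : Fin r → ℝ) j), le_abs_self ((x:Fin r → ℝ) j), neg_abs_le ((x:Fin r → ℝ) j)] ))
        (hbound _ (by nlinarith [abs_nonneg ((x : Fin r → ℝ) j), le_abs_self ((y:Fin r → ℝ) j), neg_abs_le ((y:Fin r → ℝ) j)] ))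
        heq
      exact hj (mul_left_cancel₀ (ne_of_gt hc) hinj)
    refine ⟨(Rdg w (-(Real.pi/2)) : ↥K → ℝ), ⟨Rdg w (-(Real.pi/2)), ?_, rfl⟩, ?_⟩
    · show Rdg w (-(Real.pi/2)) ∈ A
      exact Submodule.subset_span ⟨_, _, rfl⟩
    · rw [hval x, hval y]; exact hne
  have hdense := ContinuousMap.subalgebra_topologicalClosure_eq_top_of_separatesPoints A hsep
  set F : C(↥K, ℝ) := ⟨K.restrict f, hf.restrict⟩ with hFdef
  have hFcl : F ∈ closure (A : Set C(↥K, ℝ)) := by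
    rw [← Subalgebra.topologicalClosure_coe, hdense]
    trivial
  obtain ⟨g, hgA, hgdist⟩ := Metric.mem_closure_iff.mp hFcl ε hε
  have hgp : g ∈ p := hgA
  rw [hpdef, Submodule.mem_span_set'] at hgp
  obtain ⟨m, coeff, gens, hgsum⟩ := hgp
  have hgen : ∀ i : Fin m, ∃ w θ, Rdg w θ = (gens i : C(↥K, ℝ)) := fun i => (gens i).2
  choose w θ hwθ using hgen
  refine ⟨m, coeff, w, θ, ?_⟩
  intro x hx
  set x' : ↥K := ⟨x, hx⟩ with hx'def
  have h1 : |F x' - g x'| < ε := by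
    have := ContinuousMap.dist_apply_le_dist (f := F) (g := g) x'
    rw [Real.dist_eq] at this
    exact lt_of_le_of_lt this hgdist
  have h2 : F x' = f x := rfl
  have h3 : g x' = ∑ i, coeff i * Real.cos (∑ j, w i j * x j + θ i) := by
    rw [← hgsum]
    rw [ContinuousMap.sum_apply]
    refine Finset.sum_congr rfl (fun i _ => ?_)
    rw [ContinuousMap.smul_apply, ← hwθ i]
    show coeff i • Real.cos _ = _
    rw [smul_eq_mul]
  rw [← h2, ← h3]
  exact h1

set_option maxHeartbeats 1000000 in
/-- Boundedness (plus measurability) of a sigmoidal activation suffices for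
Cybenko's universal approximation theorem: single-hidden-layer networks are
dense in `C(K)` for every compact `K ⊆ ℝ^r`. -/
theorem universal_approximation_bounded_sigmoidal
    (σ : ℝ → ℝ) (hbdd : ∃ M : ℝ, ∀ t, |σ t| ≤ M) (hmeas : Measurable σ)
    (hσ : IsSigmoidal σ) (r : ℕ) (hr : 1 ≤ r)
    (K : Set (Fin r → ℝ)) (hK : IsCompact K)
    (f : (Fin r → ℝ) → ℝ) (hf : ContinuousOn f K)
    (ε : ℝ) (hε : 0 < ε) :
    ∃ (N : ℕ) (c : Fin N → ℝ) (w : Fin N → Fin r → ℝ) (θ : Fin N → ℝ),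
      ∀ x ∈ K, |f x - ∑ i, c i * σ (∑ j, w i j * x j + θ i)| < ε := by
  obtain ⟨M, hM⟩ := hbdd
  rcases Set.eq_empty_or_nonempty K with rfl | ⟨x₀, hx₀⟩
  · exact ⟨0, fun i => 0, fun i => 0, fun i => 0, by simp⟩
  obtain ⟨m, a, w, θ, hcombo⟩ := ridge_cos_dense K hK f hf (ε/2) (by positivity)
  obtain ⟨C, hC⟩ := hK.exists_bound_of_continuousOn continuous_id.continuousOn
  have hC0 : 0 ≤ C := le_trans (norm_nonneg x₀) (hC x₀ hx₀)
  set R : Fin m → ℝ := fun i => max 1 ((∑ j, |w i j|) * C) with hRdef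
  have hRmem : ∀ (i : Fin m) (x), x ∈ K →
      (∑ j, w i j * x j) ∈ Set.Icc (-(R i)) (R i) := by
    intro i x hx
    have hxn : ∀ j, |x j| ≤ C := by
      intro j
      have h1 : ‖x j‖ ≤ ‖x‖ := norm_le_pi_norm x j
      have h2 : ‖id x‖ ≤ C := hC x hx
      simpa [Real.norm_eq_abs] using le_trans h1 h2
    have hb : |∑ j, w i j * x j| ≤ (∑ j, |w i j|) * C := by
      calc |∑ j, w i j * x j| ≤ ∑ j, |w i j * x j| := Finset.abs_sum_le_sum_abs _ _
      _ = ∑ j, |w i j| * |x j| := by simp [abs_mul]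
      _ ≤ ∑ j, |w i j| * C :=
          Finset.sum_le_sum (fun j _ =>
            mul_le_mul_of_nonneg_left (hxn j) (abs_nonneg _))
      _ = (∑ j, |w i j|) * C := by rw [Finset.sum_mul]
    have hb' := abs_le.mp (le_trans hb (le_max_right 1 _))
    exact ⟨hb'.1, hb'.2⟩
  have hmR : ∀ i, (1:ℝ) ≤ R i := fun i => le_max_left _ _
  set ε' := ε / (2 * (m+1)) with hε'def
  have hε' : 0 < ε' := by positivity
  have H : ∀ i : Fin m, ∃ (n : ℕ) (c a' b : Fin n → ℝ),
      ∀ s ∈ Set.Icc (-(R i)) (R i),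
        |a i * Real.cos (s + θ i) - ∑ k, c k * σ (a' k * s + b k)| < ε' :=
    fun i => sigmoid_onedim σ M hM hσ (fun s => a i * Real.cos (s + θ i))
      (continuous_const.mul
        (Real.continuous_cos.comp (continuous_id.add continuous_const)))
      (R i) ε' (hmR i) hε'
  choose nn cc aa bb hnet using H
  refine ⟨Fintype.card ((i : Fin m) × Fin (nn i)),
    fun k => cc ((Fintype.equivFin ((i : Fin m) × Fin (nn i))).symm k).1
      ((Fintype.equivFin ((i : Fin m) × Fin (nn i))).symm k).2,
    fun k => fun j => aa ((Fintype.equivFin ((i : Fin m) × Fin (nn i))).symm k).1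
      ((Fintype.equivFin ((i : Fin m) × Fin (nn i))).symm k).2
      * w ((Fintype.equivFin ((i : Fin m) × Fin (nn i))).symm k).1 j,
    fun k => bb ((Fintype.equivFin ((i : Fin m) × Fin (nn i))).symm k).1
      ((Fintype.equivFin ((i : Fin m) × Fin (nn i))).symm k).2, ?_⟩
  intro x hx
  set e := Fintype.equivFin ((i : Fin m) × Fin (nn i)) with hedef
  set G : ((i : Fin m) × Fin (nn i)) → ℝ := fun p =>
    cc p.1 p.2 * σ (aa p.1 p.2 * (∑ j, w p.1 j * x j) + bb p.1 p.2) with hGdef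
  have hflat : ∑ k, (fun k => cc (e.symm k).1 (e.symm k).2) k
      * σ (∑ j, (fun k => fun j => aa (e.symm k).1 (e.symm k).2 * w (e.symm k).1 j) k j
          * x j + (fun k => bb (e.symm k).1 (e.symm k).2) k)
      = ∑ i : Fin m, ∑ kk : Fin (nn i),
          cc i kk * σ (aa i kk * (∑ j, w i j * x j) + bb i kk) := by
    have h1 : ∀ k, (fun k => cc (e.symm k).1 (e.symm k).2) k
        * σ (∑ j, (fun k => fun j => aa (e.symm k).1 (e.symm k).2 * w (e.symm k).1 j) k j
            * x j + (fun k => bb (e.symm k).1 (e.symm k).2) k) = G (e.symm k) := by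
      intro k
      have harg : ∑ j, (aa (e.symm k).1 (e.symm k).2 * w (e.symm k).1 j) * x j
          = aa (e.symm k).1 (e.symm k).2 * ∑ j, w (e.symm k).1 j * x j := by
        rw [Finset.mul_sum]
        exact Finset.sum_congr rfl (fun j _ => by ring)
      simp only [hGdef]
      rw [harg]
    rw [Finset.sum_congr rfl (fun k _ => h1 k), Equiv.sum_comp e.symm G]
    rw [← Finset.univ_sigma_univ, Finset.sum_sigma]
  rw [hflat]
  have hdiff : ∀ i : Fin m,
      |a i * Real.cos ((∑ j, w i j * x j) + θ i)
        - ∑ kk : Fin (nn i), cc i kk * σ (aa i kk * (∑ j, w i j * x j) + bb i kk)| < ε' :=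
    fun i => hnet i (∑ j, w i j * x j) (hRmem i x hx)
  have hsplit : f x - ∑ i : Fin m, ∑ kk : Fin (nn i),
        cc i kk * σ (aa i kk * (∑ j, w i j * x j) + bb i kk)
      = (f x - ∑ i : Fin m, a i * Real.cos ((∑ j, w i j * x j) + θ i))
        + ∑ i : Fin m, (a i * Real.cos ((∑ j, w i j * x j) + θ i)
          - ∑ kk : Fin (nn i), cc i kk * σ (aa i kk * (∑ j, w i j * x j) + bb i kk)) := by
    rw [Finset.sum_sub_distrib]; ring
  rw [hsplit]
  have hsum2 : |∑ i : Fin m, (a i * Real.cos ((∑ j, w i j * x j) + θ i)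
      - ∑ kk : Fin (nn i), cc i kk * σ (aa i kk * (∑ j, w i j * x j) + bb i kk))|
      ≤ (m : ℝ) * ε' := by
    calc _ ≤ ∑ i : Fin m, |a i * Real.cos ((∑ j, w i j * x j) + θ i)
        - ∑ kk : Fin (nn i), cc i kk * σ (aa i kk * (∑ j, w i j * x j) + bb i kk)| :=
        Finset.abs_sum_le_sum_abs _ _
    _ ≤ ∑ _i : Fin m, ε' := Finset.sum_le_sum (fun i _ => (hdiff i).le)
    _ = (m : ℝ) * ε' := by rw [Finset.sum_const, Finset.card_univ, Fintype.card_fin,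
        nsmul_eq_mul]
  have hfirst : |f x - ∑ i : Fin m, a i * Real.cos ((∑ j, w i j * x j) + θ i)| < ε/2 :=
    hcombo x hx
  have hmε : (m : ℝ) * ε' < ε/2 := by
    rw [hε'def]
    rw [mul_div_assoc', div_lt_div_iff₀ (by positivity) (by norm_num)]
    have : (0:ℝ) ≤ m := Nat.cast_nonneg m
    nlinarith
  calc |(f x - ∑ i : Fin m, a i * Real.cos ((∑ j, w i j * x j) + θ i))
      + ∑ i : Fin m, (a i * Real.cos ((∑ j, w i j * x j) + θ i)
        - ∑ kk : Fin (nn i), cc i kk * σ (aa i kk * (∑ j, w i j * x j) + bb i kk))|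
      ≤ |f x - ∑ i : Fin m, a i * Real.cos ((∑ j, w i j * x j) + θ i)|
        + |∑ i : Fin m, (a i * Real.cos ((∑ j, w i j * x j) + θ i)
          - ∑ kk : Fin (nn i), cc i kk * σ (aa i kk * (∑ j, w i j * x j) + bb i kk))| :=
      abs_add_le _ _
  _ < ε := by linarith
end
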